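/- arXiv:2302.05987 — 7 statements merged into one kernel-verified Lean document; each statement's English description precedes it below -/
import Mathlib

section
/- Let x₁, x₂, x₃ be positive reals with x₁x₂x₃ = 1 and 6·2^{1/3} ≤ 2(x₁² + x₂² + x₃²) < 6·3^{1/3}. Then 1/x₁² + 1/x₂² + 1/x₃² < 5.15519. -/
set_option maxHeartbeats 1000000 in
theorem stmt_1 (x₁ x₂ x₃ : ℝ) (h₁ : 0 < x₁) (h₂ : 0 < x₂) (h₃ : 0 < x₃)
    (hprod : x₁ * x₂ * x₃ = 1)
    (hlo : 6 * (2 : ℝ) ^ ((1 : ℝ) / 3) ≤ 2 * (x₁ ^ 2 + x₂ ^ 2 + x₃ ^ 2))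
    (hhi : 2 * (x₁ ^ 2 + x₂ ^ 2 + x₃ ^ 2) < 6 * (3 : ℝ) ^ ((1 : ℝ) / 3)) :
    1 / x₁ ^ 2 + 1 / x₂ ^ 2 + 1 / x₃ ^ 2 < 5.15519 := by
  obtain ⟨a, ha⟩ : ∃ a : ℝ, a = x₁ ^ 2 := ⟨_, rfl⟩
  obtain ⟨b, hb⟩ : ∃ b : ℝ, b = x₂ ^ 2 := ⟨_, rfl⟩
  obtain ⟨c, hc⟩ : ∃ c : ℝ, c = x₃ ^ 2 := ⟨_, rfl⟩
  rw [← ha, ← hb, ← hc]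
  have ha0 : 0 < a := by rw [ha]; positivity
  have hb0 : 0 < b := by rw [hb]; positivity
  have hc0 : 0 < c := by rw [hc]; positivity
  have habc : a * b * c = 1 := by
    rw [ha, hb, hc]; nlinarith [hprod]
  have hgoal : 1 / a + 1 / b + 1 / c = a*b + b*c + c*a := by
    have e1 : 1 / a = b * c := by
      field_simp; linear_combination -habc
    have e2 : 1 / b = a * c := by
      field_simp; linear_combination -habc
    have e3 : 1 / c = a * b := by
      field_simp; linear_combination -habc
    rw [e1, e2, e3]; ring
  rw [hgoal]
  obtain ⟨s, hs⟩ : ∃ s : ℝ, s = a + b + c := ⟨_, rfl⟩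
  obtain ⟨q, hq⟩ : ∃ q : ℝ, q = a*b + b*c + c*a := ⟨_, rfl⟩
  rw [← hq]
  have hsx : 2 * (x₁ ^ 2 + x₂ ^ 2 + x₃ ^ 2) = 2 * s := by rw [hs, ha, hb, hc]
  rw [hsx] at hhi
  have hs0 : 0 < s := by rw [hs]; positivity
  have hs27 : 27 ≤ s ^ 3 := by
    rw [hs]
    nlinarith [mul_nonneg (sq_nonneg (a-b)) hc0.le, mul_nonneg (sq_nonneg (b-c)) ha0.le,
      mul_nonneg (sq_nonneg (a-c)) hb0.le,
      mul_nonneg (by positivity : (0:ℝ) ≤ a + b + c) (sq_nonneg (a-b)),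
      mul_nonneg (by positivity : (0:ℝ) ≤ a + b + c) (sq_nonneg (b-c)),
      mul_nonneg (by positivity : (0:ℝ) ≤ a + b + c) (sq_nonneg (a-c)), habc]
  have hs3 : 3 ≤ s := by nlinarith [hs27, sq_nonneg (s-3), sq_nonneg (s+3)]
  have ht : ((3:ℝ) ^ ((1:ℝ)/3)) ^ (3:ℕ) = 3 := by
    rw [← Real.rpow_natCast ((3:ℝ) ^ ((1:ℝ)/3)) 3, ← Real.rpow_mul (by norm_num)]
    norm_num
  have hslt : s < 3 * (3:ℝ) ^ ((1:ℝ)/3) := by linarith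
  have hs81 : s ^ 3 < 81 := by
    have h2 : s ^ 3 < (3 * (3:ℝ) ^ ((1:ℝ)/3)) ^ 3 :=
      pow_lt_pow_left₀ hslt hs0.le (by norm_num)
    calc s ^ 3 < (3 * (3:ℝ) ^ ((1:ℝ)/3)) ^ 3 := h2
      _ = 27 * ((3:ℝ) ^ ((1:ℝ)/3)) ^ (3:ℕ) := by ring
      _ = 81 := by rw [ht]; norm_num
  have hΔ : 0 ≤ 18*s*q - 4*s^3 + s^2*q^2 - 4*q^3 - 27 := by
    have hid : 18*s*q - 4*s^3 + s^2*q^2 - 4*q^3 - 27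
        = ((a-b)*(b-c)*(c-a))^2 := by
      rw [hs, hq]
      linear_combination (-(18*(a+b+c)*(a*b+b*c+c*a) - 4*(a+b+c)^3 - 27*(1+a*b*c))) * habc
    rw [hid]; positivity
  have hu : s < 17307/4000 := by
    by_contra h
    push_neg at h
    have h3 : (17307/4000:ℝ)^3 ≤ s^3 := pow_le_pow_left₀ (by norm_num) h 3
    have h4 : (81:ℝ) < (17307/4000:ℝ)^3 := by norm_num
    linarith
  by_contra hcon
  push_neg at hcon
  have hQ : (5.15519 : ℝ) ≤ q := hcon
  have f2 : 0 ≤ (17307/4000 - s) * (q^2*(17307/4000 + s) + 18*q - 4*((17307/4000)^2 + (17307/4000)*s + s^2)) := by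
    apply mul_nonneg (by linarith)
    have hqq : (5.15519:ℝ)^2 ≤ q^2 := by nlinarith [hQ]
    nlinarith [hqq, hs3, hu, hQ]
  have f3 : 0 ≤ (q - 5.15519) * (4*(q^2 + q*5.15519 + 5.15519^2) - (17307/4000)^2*(q + 5.15519) - 18*(17307/4000)) := by
    apply mul_nonneg (by linarith)
    nlinarith [hQ]
  nlinarith [hΔ, f2, f3]
end

section
/- Let x, y, z be real numbers with x + y + z = 0 and 2(x² + y² + z²) < 0.24163². Then 2(e^{2x} + e^{2y} + e^{2z} − 3) ≥ 1.9·2(x² + y² + z²). -/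
lemma key_exp (s : ℝ) (hs : |s| ≤ 1) :
    Real.exp s ≥ 1 + s + s ^ 2 / 2 + s ^ 3 / 6 + s ^ 4 / 24 - |s| ^ 5 / 100 := by
  have h := Real.exp_bound hs (n := 5) (by norm_num)
  have h2 := (abs_sub_le_iff.1 h).2
  have hsum : ∑ m ∈ Finset.range 5, s ^ m / m.factorial
      = 1 + s + s ^ 2 / 2 + s ^ 3 / 6 + s ^ 4 / 24 := by
    simp [Finset.sum_range_succ, Nat.factorial]
  rw [hsum] at h2
  have hc : ((Nat.succ 5 : ℕ) : ℝ) / ((Nat.factorial 5 : ℕ) * (5:ℕ)) = 1 / 100 := by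
    norm_num [Nat.factorial]
  rw [hc] at h2
  nlinarith [abs_nonneg s]

lemma key_exp2 (t : ℝ) (ht : t ^ 2 ≤ 0.03) :
    Real.exp (2 * t) ≥ 1 + 2 * t + 2 * t ^ 2 + (4 / 3) * t ^ 3 := by
  have ha : |t| ≤ 0.2 :=
    abs_le.mpr ⟨by nlinarith [sq_nonneg (t + 0.2)], by nlinarith [sq_nonneg (t - 0.2)]⟩
  have hs : |2 * t| ≤ 1 := by
    rw [abs_mul, show |(2:ℝ)| = 2 by norm_num]
    linarith [abs_nonneg t]
  have h := key_exp (2 * t) hs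
  have h2 : |2 * t| ^ 5 = 32 * |t| ^ 5 := by
    rw [abs_mul, show |(2:ℝ)| = 2 by norm_num]; ring
  have h3 : |t| ^ 5 ≤ 0.2 * t ^ 4 := by
    have h4 : |t| ^ 4 = t ^ 4 := by
      rw [show (4:ℕ) = 2*2 by norm_num, pow_mul, pow_mul, sq_abs]
    calc |t| ^ 5 = |t| * |t| ^ 4 := by ring
    _ ≤ 0.2 * |t| ^ 4 := mul_le_mul_of_nonneg_right ha (by positivity)
    _ = 0.2 * t ^ 4 := by rw [h4]
  nlinarith [pow_nonneg (sq_nonneg t) 2]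

set_option maxHeartbeats 1000000 in
theorem stmt_6 (x y z : ℝ) (hsum : x + y + z = 0)
    (hsmall : 2 * (x ^ 2 + y ^ 2 + z ^ 2) < 0.24163 ^ 2) :
    2 * (Real.exp (2 * x) + Real.exp (2 * y) + Real.exp (2 * z) - 3) ≥
      1.9 * (2 * (x ^ 2 + y ^ 2 + z ^ 2)) := by
  have hSsmall : x ^ 2 + y ^ 2 + z ^ 2 ≤ 0.03 := by nlinarith
  have hSnn : (0:ℝ) ≤ x ^ 2 + y ^ 2 + z ^ 2 := by positivity
  have hx := key_exp2 x (by nlinarith [sq_nonneg y, sq_nonneg z])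
  have hy := key_exp2 y (by nlinarith [sq_nonneg x, sq_nonneg z])
  have hz := key_exp2 z (by nlinarith [sq_nonneg x, sq_nonneg y])
  have hcube : x ^ 3 + y ^ 3 + z ^ 3 = 3 * (x * y * z) := by
    linear_combination (x ^ 2 + y ^ 2 + z ^ 2 - x * y - y * z - z * x) * hsum
  have h54 : 54 * (x * y * z) ^ 2 ≤ (x ^ 2 + y ^ 2 + z ^ 2) ^ 3 := by
    have hzv : z = -x - y := by linarith
    subst hzv
    nlinarith [sq_nonneg (x-y), sq_nonneg (x+y), sq_nonneg (x+2*y), sq_nonneg (2*x+y),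
      sq_nonneg (x*y), sq_nonneg ((x-y)*(x+2*y)*(2*x+y)), sq_nonneg (x*y*(x+y))]
  have hS3 : (x ^ 2 + y ^ 2 + z ^ 2) ^ 3 ≤ 0.03 * (x ^ 2 + y ^ 2 + z ^ 2) ^ 2 := by
    nlinarith [sq_nonneg (x ^ 2 + y ^ 2 + z ^ 2)]
  have h64 : 64 * (x * y * z) ^ 2 ≤ 0.04 * (x ^ 2 + y ^ 2 + z ^ 2) ^ 2 := by
    nlinarith
  have h8 : 0.2 * (x ^ 2 + y ^ 2 + z ^ 2) + 8 * (x * y * z) ≥ 0 := by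
    nlinarith [sq_nonneg (0.2 * (x ^ 2 + y ^ 2 + z ^ 2) + 8 * (x * y * z)),
      sq_nonneg (0.2 * (x ^ 2 + y ^ 2 + z ^ 2) - 8 * (x * y * z))]
  nlinarith [hx, hy, hz, hcube, h8]
end

section
/- Let L be a lattice in ℝ⁶ whose nonzero vectors all have length at least a > 0, let ξ > 0 and M ≥ a². Then ∑_{x ∈ L, ‖x‖² ≥ M} e^{−ξ‖x‖²} ≤ ξ·∫_M^∞ ((2√t/a + 1)⁶ − (2√M/a − 1)⁶)·e^{−ξt} dt. -/
/-!
Since `exp (-ξ s) = ξ ∫_s^∞ exp (-ξ t) dt`, the sum equals `ξ ∫_M^∞ N(t) exp (-ξ t) dt`, where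
`N(t)` counts the lattice points with `M ≤ ‖x‖² ≤ t`. The balls of radius `a / 2` around these
points are pairwise disjoint and lie in the annulus `√M - a/2 ≤ ‖y‖ ≤ √t + a/2`, so comparing
volumes gives `N(t) ≤ (2√t/a + 1)⁶ - (2√M/a - 1)⁶`.
-/

open MeasureTheory Real Set Metric Filter Asymptotics Module
open scoped ENNReal Finset

section Packing

variable {E : Type*} [NormedAddCommGroup E] [NormedSpace ℝ E] [FiniteDimensional ℝ E]
  [MeasurableSpace E] [BorelSpace E] [Nontrivial E]

lemma addHaar_closedBall_diff_ball_mul (μ : Measure E) [μ.IsAddHaarMeasure] {A B ρ : ℝ}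
    (hB : 0 ≤ B) (hBA : B ≤ A) (hρ : 0 ≤ ρ) :
    μ (closedBall 0 (A * ρ) \ ball 0 (B * ρ)) =
      ENNReal.ofReal (A ^ finrank ℝ E - B ^ finrank ℝ E) * μ (ball 0 ρ) := by
  have hsub : ball (0 : E) (B * ρ) ⊆ closedBall 0 (A * ρ) :=
    ball_subset_closedBall.trans (closedBall_subset_closedBall (by gcongr))
  rw [measure_sdiff hsub measurableSet_ball.nullMeasurableSet measure_ball_lt_top.ne,
    Measure.addHaar_closedBall_mul μ 0 (hB.trans hBA) hρ,
    Measure.addHaar_closedBall_eq_addHaar_ball, Measure.addHaar_ball_mul μ 0 hB,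
    ← ENNReal.sub_mul (fun _ _ => measure_ball_lt_top.ne),
    ← ENNReal.ofReal_sub _ (by positivity)]

lemma card_le_of_pairwise_le_dist_of_mem_annulus {a r R : ℝ} (F : Finset E) (ha : 0 < a)
    (har : a ≤ 2 * r) (hrR : r ≤ R) (hsep : (F : Set E).Pairwise fun x y => a ≤ dist x y)
    (hF : ∀ x ∈ F, r ≤ ‖x‖ ∧ ‖x‖ ≤ R) :
    (#F : ℝ) ≤ (2 * R / a + 1) ^ finrank ℝ E - (2 * r / a - 1) ^ finrank ℝ E := by
  let μ : Measure E := Measure.addHaar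
  set A := 2 * R / a + 1
  set B := 2 * r / a - 1
  have hB : 0 ≤ B := by
    simp only [B, sub_nonneg, one_le_div ha]; linarith
  have hBA : B ≤ A := by
    have : 2 * r / a ≤ 2 * R / a := by gcongr
    linarith
  have hA_eq : A * (a / 2) = R + a / 2 := by simp only [A]; field_simp
  have hB_eq : B * (a / 2) = r - a / 2 := by simp only [B]; field_simp
  have hdisj : (F : Set E).PairwiseDisjoint (ball · (a / 2)) := fun x hx y hy hxy =>
    ball_disjoint_ball (by linarith [hsep hx hy hxy])
  have hsub : ∀ x ∈ F, ball x (a / 2) ⊆ closedBall 0 (A * (a / 2)) \ ball 0 (B * (a / 2)) := by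
    intro x hx z hz
    have hzx := abs_sub_lt_iff.mp ((abs_norm_sub_norm_le z x).trans_lt (mem_ball_iff_norm.mp hz))
    simp only [hA_eq, hB_eq, Set.mem_sdiff, mem_closedBall_zero_iff, mem_ball_zero_iff, not_lt]
    constructor <;> linarith [hF x hx]
  have hvol : (#F : ℝ≥0∞) * μ (ball 0 (a / 2)) ≤
      ENNReal.ofReal (A ^ finrank ℝ E - B ^ finrank ℝ E) * μ (ball 0 (a / 2)) := calc
    (#F : ℝ≥0∞) * μ (ball 0 (a / 2)) = ∑ x ∈ F, μ (ball x (a / 2)) := by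
      simp [Measure.addHaar_ball_center]
    _ = μ (⋃ x ∈ F, ball x (a / 2)) :=
      (measure_biUnion_finset hdisj fun _ _ => measurableSet_ball).symm
    _ ≤ μ (closedBall 0 (A * (a / 2)) \ ball 0 (B * (a / 2))) :=
      measure_mono (iUnion₂_subset hsub)
    _ = _ := addHaar_closedBall_diff_ball_mul μ hB hBA (by positivity)
  have hball : μ (ball 0 (a / 2)) ≠ 0 := (measure_ball_pos μ 0 (by positivity)).ne'
  rw [ENNReal.mul_le_mul_iff_left hball measure_ball_lt_top.ne] at hvol
  have hAB : 0 ≤ A ^ finrank ℝ E - B ^ finrank ℝ E := sub_nonneg.mpr (pow_le_pow_left₀ hB hBA _)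
  rwa [← ENNReal.ofReal_natCast, ENNReal.ofReal_le_ofReal_iff hAB] at hvol

lemma AddSubgroup.card_le_of_mem_annulus (L : AddSubgroup E) {a M t : ℝ} (ha : 0 < a)
    (hmin : ∀ x ∈ L, x ≠ 0 → a ≤ ‖x‖) (hM : a ^ 2 ≤ M) (hMt : M ≤ t) (F : Finset E)
    (hF : ∀ x ∈ F, x ∈ L ∧ M ≤ ‖x‖ ^ 2 ∧ ‖x‖ ^ 2 ≤ t) :
    (#F : ℝ) ≤ (2 * √t / a + 1) ^ finrank ℝ E - (2 * √M / a - 1) ^ finrank ℝ E := by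
  have haM : a ≤ √M := (le_sqrt' ha).mpr hM
  refine card_le_of_pairwise_le_dist_of_mem_annulus F ha (by linarith) (sqrt_le_sqrt hMt)
    (fun x hx y hy hxy => ?_) fun x hx => ?_
  · change a ≤ dist x y
    rw [dist_eq_norm]
    exact hmin _ (L.sub_mem (hF x hx).1 (hF y hy).1) (sub_ne_zero.mpr hxy)
  · obtain ⟨-, hMx, hxt⟩ := hF x hx
    exact ⟨(sqrt_le_left (norm_nonneg x)).mpr hMx, abs_norm x ▸ abs_le_sqrt hxt⟩

end Packing

lemma integrableOn_Ici_exp_neg_mul (M : ℝ) {ξ : ℝ} (hξ : 0 < ξ) :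
    IntegrableOn (fun t => exp (-ξ * t)) (Ici M) :=
  (integrableOn_Ici_iff_integrableOn_Ioi).mpr (exp_neg_integrableOn_Ioi M hξ)

lemma exp_neg_mul_eq_mul_setIntegral_indicator {ξ M s : ℝ} (hξ : 0 < ξ) (hMs : M ≤ s) :
    exp (-ξ * s) = ξ * ∫ t in Ici M, (Ici s).indicator (fun t => exp (-ξ * t)) t := by
  rw [setIntegral_indicator measurableSet_Ici, inter_eq_right.mpr (Ici_subset_Ici.mpr hMs),
    integral_Ici_eq_integral_Ioi, integral_exp_mul_Ioi (neg_lt_zero.mpr hξ)]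
  field_simp

lemma sum_exp_neg_mul_eq_mul_integral_card {ι : Type*} (F : Finset ι) (s : ι → ℝ) {ξ M : ℝ}
    (hξ : 0 < ξ) (hs : ∀ i ∈ F, M ≤ s i) :
    ∑ i ∈ F, exp (-ξ * s i) = ξ * ∫ t in Ici M, #{i ∈ F | s i ≤ t} * exp (-ξ * t) := by
  calc ∑ i ∈ F, exp (-ξ * s i)
      = ∑ i ∈ F, ξ * ∫ t in Ici M, (Ici (s i)).indicator (fun t => exp (-ξ * t)) t :=
        Finset.sum_congr rfl fun i hi => exp_neg_mul_eq_mul_setIntegral_indicator hξ (hs i hi)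
    _ = ξ * ∫ t in Ici M, ∑ i ∈ F, (Ici (s i)).indicator (fun t => exp (-ξ * t)) t := by
        rw [← Finset.mul_sum, integral_finsetSum F fun i _ =>
          (integrableOn_Ici_exp_neg_mul M hξ).indicator measurableSet_Ici]
    _ = ξ * ∫ t in Ici M, #{i ∈ F | s i ≤ t} * exp (-ξ * t) := by
        simp only [indicator_apply, mem_Ici, ← Finset.sum_filter, Finset.sum_const, nsmul_eq_mul]

lemma integrableOn_Ici_mul_exp_neg_of_isBigO_pow {f : ℝ → ℝ} {ξ : ℝ} (hξ : 0 < ξ) (k : ℕ)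
    (hf : Continuous f) (hfk : f =O[atTop] (· ^ k)) (M : ℝ) :
    IntegrableOn (fun t => f t * exp (-ξ * t)) (Ici M) := by
  have hdecay : (fun t => f t * exp (-ξ * t)) =O[atTop] fun t => exp (-(ξ / 2) * t) := by
    refine ((hfk.trans_isLittleO (isLittleO_pow_exp_pos_mul_atTop k (half_pos hξ))).isBigO.mul
      (isBigO_refl _ atTop)).congr_right fun t => ?_
    rw [← exp_add]; ring_nf
  exact (integrableOn_Ici_iff_integrableOn_Ioi).mpr
    (integrable_of_isBigO_exp_neg (half_pos hξ) (by fun_prop) hdecay)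

lemma isBigO_two_mul_sqrt_div_add_one (a : ℝ) : (fun t => 2 * √t / a + 1) =O[atTop] id := by
  have hsqrt : (fun t => √t) =O[atTop] id := IsBigO.of_bound 1 <| by
    filter_upwards [eventually_ge_atTop 1] with t ht
    rw [norm_of_nonneg (sqrt_nonneg t), id, norm_of_nonneg (by linarith), one_mul,
      sqrt_le_left (by linarith)]
    nlinarith
  exact ((hsqrt.const_mul_left (2 / a)).add (isLittleO_const_id_atTop (1 : ℝ)).isBigO).congr_left
    fun t => by ring

lemma integrableOn_Ici_sqrt_poly_mul_exp_neg (a c : ℝ) {ξ : ℝ} (hξ : 0 < ξ) (n : ℕ) (M : ℝ) :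
    IntegrableOn (fun t => ((2 * √t / a + 1) ^ n - c) * exp (-ξ * t)) (Ici M) := by
  have hmain := integrableOn_Ici_mul_exp_neg_of_isBigO_pow hξ n (by fun_prop)
    ((isBigO_two_mul_sqrt_div_add_one a).pow n) M
  simp only [sub_mul]
  exact hmain.sub ((integrableOn_Ici_exp_neg_mul M hξ).const_mul c)

theorem stmt_8 (L : Submodule ℤ (EuclideanSpace ℝ (Fin 6))) (a ξ M : ℝ)
    (ha : 0 < a) (hmin : ∀ x ∈ L, x ≠ 0 → a ≤ ‖x‖) (hξ : 0 < ξ) (hM : a ^ 2 ≤ M) :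
    ∑' x : {x : EuclideanSpace ℝ (Fin 6) // x ∈ L ∧ M ≤ ‖x‖ ^ 2},
        Real.exp (-ξ * ‖(x : EuclideanSpace ℝ (Fin 6))‖ ^ 2) ≤
      ξ * ∫ t in Set.Ici M,
        ((2 * Real.sqrt t / a + 1) ^ 6 - (2 * Real.sqrt M / a - 1) ^ 6) * Real.exp (-ξ * t) := by
  have hpartial : ∀ F : Finset {x : EuclideanSpace ℝ (Fin 6) // x ∈ L ∧ M ≤ ‖x‖ ^ 2},
      ∑ x ∈ F, exp (-ξ * ‖(x : EuclideanSpace ℝ (Fin 6))‖ ^ 2) ≤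
        ξ * ∫ t in Ici M, ((2 * √t / a + 1) ^ 6 - (2 * √M / a - 1) ^ 6) * exp (-ξ * t) := by
    intro F
    rw [sum_exp_neg_mul_eq_mul_integral_card F _ hξ fun x _ => x.2.2]
    refine mul_le_mul_of_nonneg_left (integral_mono_of_nonneg
      (Eventually.of_forall fun t => by positivity)
      (integrableOn_Ici_sqrt_poly_mul_exp_neg a _ hξ 6 M) ?_) hξ.le
    filter_upwards [ae_restrict_mem measurableSet_Ici] with t (ht : M ≤ t)
    refine mul_le_mul_of_nonneg_right ?_ (exp_pos _).le
    have hcard := L.toAddSubgroup.card_le_of_mem_annulus ha hmin hM ht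
      ({x ∈ F | ‖x.1‖ ^ 2 ≤ t}.map (Function.Embedding.subtype _)) ?_
    · rwa [finrank_euclideanSpace_fin, Finset.card_map] at hcard
    simp only [Finset.mem_map, Finset.mem_filter, Function.Embedding.subtype_apply]
    rintro _ ⟨x, ⟨-, hxt⟩, rfl⟩
    exact ⟨x.2.1, x.2.2, hxt⟩
  exact tsum_le_of_sum_le' (by simpa using hpartial ∅) hpartial
end

section
/- Let L be a lattice in ℝ⁶ whose shortest nonzero vectors have squared length λ² ≥ 6. Then ∑_{x ∈ L, ‖x‖² ≥ 22} e^{−(π − 2/7)‖x‖²} < 10⁻²³. -/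
open MeasureTheory Metric Finset
open scoped ENNReal

private lemma count_lemma (G : Finset (EuclideanSpace ℝ (Fin 6))) (ρ : ℝ) (hρ : 0 ≤ ρ)
    (hsep : ∀ x ∈ G, ∀ y ∈ G, x ≠ y → Real.sqrt 6 ≤ dist x y)
    (hin : ∀ x ∈ G, ‖x‖ < ρ) :
    (G.card : ℝ) * (Real.sqrt 6 / 2) ^ 6 ≤ (ρ + Real.sqrt 6 / 2) ^ 6 := by
  set r : ℝ := Real.sqrt 6 / 2 with hrdef
  have h6 : (0:ℝ) < Real.sqrt 6 := Real.sqrt_pos.2 (by norm_num)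
  have hr0 : 0 < r := by rw [hrdef]; linarith
  have hdisj : (↑G : Set (EuclideanSpace ℝ (Fin 6))).PairwiseDisjoint (fun x => ball x r) := by
    intro x hx y hy hxy
    exact ball_disjoint_ball (by have := hsep x hx y hy hxy; rw [hrdef]; linarith)
  have hmeas : volume (⋃ x ∈ G, ball x r) = ∑ x ∈ G, volume (ball x r) :=
    measure_biUnion_finset hdisj (fun b _ => measurableSet_ball)
  have hsub : (⋃ x ∈ G, ball x r) ⊆ ball (0 : EuclideanSpace ℝ (Fin 6)) (ρ + r) := by
    intro y hy
    simp only [Set.mem_iUnion, mem_ball] at hy ⊢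
    obtain ⟨x, hx, hyx⟩ := hy
    have h1 : dist y 0 ≤ dist y x + dist x 0 := dist_triangle _ _ _
    have h2 : dist x 0 < ρ := by rw [dist_zero_right]; exact hin x hx
    linarith
  have hvol : ∀ x : EuclideanSpace ℝ (Fin 6),
      volume (ball x r) = ENNReal.ofReal (r ^ 6) * volume (ball (0 : EuclideanSpace ℝ (Fin 6)) 1) := by
    intro x
    rw [Measure.addHaar_ball volume x hr0.le, finrank_euclideanSpace_fin]
  have key : (G.card : ℝ≥0∞) * ENNReal.ofReal (r ^ 6) *
      volume (ball (0 : EuclideanSpace ℝ (Fin 6)) 1) ≤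
      ENNReal.ofReal ((ρ + r) ^ 6) * volume (ball (0 : EuclideanSpace ℝ (Fin 6)) 1) := by
    calc (G.card : ℝ≥0∞) * ENNReal.ofReal (r ^ 6) *
        volume (ball (0 : EuclideanSpace ℝ (Fin 6)) 1)
        = ∑ x ∈ G, volume (ball x r) := by
          rw [Finset.sum_congr rfl fun x _ => hvol x, Finset.sum_const, nsmul_eq_mul, mul_assoc]
      _ = volume (⋃ x ∈ G, ball x r) := hmeas.symm
      _ ≤ volume (ball (0 : EuclideanSpace ℝ (Fin 6)) (ρ + r)) := measure_mono hsub
      _ = _ := by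
          rw [Measure.addHaar_ball volume _ (by linarith : (0:ℝ) ≤ ρ + r),
            finrank_euclideanSpace_fin]
  have hV0 : volume (ball (0 : EuclideanSpace ℝ (Fin 6)) 1) ≠ 0 :=
    (measure_ball_pos volume _ one_pos).ne'
  have hVtop : volume (ball (0 : EuclideanSpace ℝ (Fin 6)) 1) ≠ ⊤ := measure_ball_lt_top.ne
  rw [ENNReal.mul_le_mul_iff_left hV0 hVtop] at key
  have key2 : ENNReal.ofReal ((G.card : ℝ) * r ^ 6) ≤ ENNReal.ofReal ((ρ + r) ^ 6) := by
    rwa [ENNReal.ofReal_mul (by positivity), ENNReal.ofReal_natCast]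
  exact (ENNReal.ofReal_le_ofReal_iff (by positivity)).1 key2

private lemma exp22 : Real.exp (-((Real.pi - 2 / 7) * 22)) ≤ 5.2e-28 := by
  have hπ : (3.141592:ℝ) < Real.pi := Real.pi_gt_d6
  have h1 : (62.8293097:ℝ) ≤ (Real.pi - 2 / 7) * 22 := by nlinarith
  have e62 : (2.7182818283:ℝ) ^ (62:ℕ) ≤ Real.exp 62 := by
    calc (2.7182818283:ℝ) ^ (62:ℕ) ≤ Real.exp 1 ^ (62:ℕ) :=
          pow_le_pow_left₀ (by norm_num) Real.exp_one_gt_d9.le 62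
      _ = Real.exp 62 := by rw [← Real.exp_nat_mul]; norm_num
  have efrac : ((1:ℝ) + 0.8293097 / 64) ^ (64:ℕ) ≤ Real.exp 0.8293097 := by
    calc ((1:ℝ) + 0.8293097 / 64) ^ (64:ℕ) ≤ Real.exp (0.8293097 / 64) ^ (64:ℕ) := by
          apply pow_le_pow_left₀ (by norm_num)
          · linarith [Real.add_one_le_exp ((0.8293097:ℝ) / 64)]
      _ = Real.exp 0.8293097 := by rw [← Real.exp_nat_mul]; norm_num
  have hX : (1.9235e27:ℝ) ≤ Real.exp ((Real.pi - 2 / 7) * 22) := by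
    have hsplit : Real.exp ((62.8293097:ℝ)) = Real.exp 62 * Real.exp 0.8293097 := by
      rw [← Real.exp_add]; norm_num
    have hmul : (1.9235e27:ℝ) ≤ (2.7182818283:ℝ) ^ (62:ℕ) * ((1:ℝ) + 0.8293097 / 64) ^ (64:ℕ) := by
      norm_num
    calc (1.9235e27:ℝ) ≤ (2.7182818283:ℝ) ^ (62:ℕ) * ((1:ℝ) + 0.8293097 / 64) ^ (64:ℕ) := hmul
      _ ≤ Real.exp 62 * Real.exp 0.8293097 :=
          mul_le_mul e62 efrac (by positivity) (Real.exp_nonneg _)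
      _ = Real.exp 62.8293097 := hsplit.symm
      _ ≤ Real.exp ((Real.pi - 2 / 7) * 22) := Real.exp_le_exp.2 h1
  rw [Real.exp_neg]
  have h0 : (0:ℝ) < 1.9235e27 := by norm_num
  calc (Real.exp ((Real.pi - 2 / 7) * 22))⁻¹ ≤ ((1.9235e27:ℝ))⁻¹ := by
        apply inv_anti₀ h0 hX
    _ ≤ 5.2e-28 := by norm_num

private lemma qexp : Real.exp (3 / 23 - (Real.pi - 2 / 7)) ≤ 0.066 := by
  have hπ : (3.141592:ℝ) < Real.pi := Real.pi_gt_d6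
  have h1 : (3:ℝ) / 23 - (Real.pi - 2 / 7) ≤ -2.7254429 := by nlinarith
  have e2 : (2.7182818283:ℝ) ^ (2:ℕ) ≤ Real.exp 2 := by
    calc (2.7182818283:ℝ) ^ (2:ℕ) ≤ Real.exp 1 ^ (2:ℕ) :=
          pow_le_pow_left₀ (by norm_num) Real.exp_one_gt_d9.le 2
      _ = Real.exp 2 := by rw [← Real.exp_nat_mul]; norm_num
  have efrac : ((1:ℝ) + 0.7254429 / 64) ^ (64:ℕ) ≤ Real.exp 0.7254429 := by
    calc ((1:ℝ) + 0.7254429 / 64) ^ (64:ℕ) ≤ Real.exp (0.7254429 / 64) ^ (64:ℕ) := by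
          apply pow_le_pow_left₀ (by norm_num)
          · linarith [Real.add_one_le_exp ((0.7254429:ℝ) / 64)]
      _ = Real.exp 0.7254429 := by rw [← Real.exp_nat_mul]; norm_num
  have hX : (15.16:ℝ) ≤ Real.exp 2.7254429 := by
    have hsplit : Real.exp ((2.7254429:ℝ)) = Real.exp 2 * Real.exp 0.7254429 := by
      rw [← Real.exp_add]; norm_num
    have hmul : (15.16:ℝ) ≤ (2.7182818283:ℝ) ^ (2:ℕ) * ((1:ℝ) + 0.7254429 / 64) ^ (64:ℕ) := by
      norm_num
    calc (15.16:ℝ) ≤ (2.7182818283:ℝ) ^ (2:ℕ) * ((1:ℝ) + 0.7254429 / 64) ^ (64:ℕ) := hmul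
      _ ≤ Real.exp 2 * Real.exp 0.7254429 :=
          mul_le_mul e2 efrac (by positivity) (Real.exp_nonneg _)
      _ = Real.exp 2.7254429 := hsplit.symm
  calc Real.exp (3 / 23 - (Real.pi - 2 / 7)) ≤ Real.exp (-2.7254429) := Real.exp_le_exp.2 h1
    _ = (Real.exp 2.7254429)⁻¹ := Real.exp_neg _
    _ ≤ ((15.16:ℝ))⁻¹ := by apply inv_anti₀ (by norm_num) hX
    _ ≤ 0.066 := by norm_num

private lemma shell_bound (j : ℕ) (n : ℕ)
    (h : (n : ℝ) * (Real.sqrt 6 / 2) ^ 6 ≤ (Real.sqrt (23 + j) + Real.sqrt 6 / 2) ^ 6) :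
    (n : ℝ) * Real.exp (-((Real.pi - 2 / 7) * (22 + j))) ≤ 7.34e-24 * 0.066 ^ j := by
  have h6 : (0:ℝ) < Real.sqrt 6 := Real.sqrt_pos.2 (by norm_num)
  have hs23 : Real.sqrt (23 + (j:ℝ)) ≤ Real.sqrt 23 * Real.exp (j / 46) := by
    have hexp2 : Real.exp ((j:ℝ) / 46) ^ (2:ℕ) = Real.exp ((j:ℝ) / 23) := by
      rw [← Real.exp_nat_mul]; congr 1; push_cast; ring
    have h23 : (23:ℝ) + j ≤ (Real.sqrt 23 * Real.exp ((j:ℝ) / 46)) ^ 2 := by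
      rw [mul_pow, Real.sq_sqrt (by norm_num : (0:ℝ) ≤ 23), hexp2]
      nlinarith [Real.add_one_le_exp ((j:ℝ) / 23)]
    calc Real.sqrt (23 + (j:ℝ)) ≤ Real.sqrt ((Real.sqrt 23 * Real.exp ((j:ℝ) / 46)) ^ 2) :=
          Real.sqrt_le_sqrt h23
      _ = Real.sqrt 23 * Real.exp ((j:ℝ) / 46) := Real.sqrt_sq (by positivity)
  have hbr : Real.sqrt 23 + Real.sqrt 6 / 2 ≤ 4.9158 * (Real.sqrt 6 / 2) := by
    have hsq : Real.sqrt ((1.9579:ℝ) ^ 2 * 6) = 1.9579 * Real.sqrt 6 := by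
      rw [Real.sqrt_mul (by positivity), Real.sqrt_sq (by norm_num)]
    have h23 : Real.sqrt 23 ≤ 1.9579 * Real.sqrt 6 := by
      rw [← hsq]; exact Real.sqrt_le_sqrt (by norm_num)
    linarith
  have hR0 : (0:ℝ) < (Real.sqrt 6 / 2) ^ 6 := by positivity
  have hstep1 : Real.sqrt (23 + (j:ℝ)) + Real.sqrt 6 / 2 ≤
      (Real.sqrt 23 + Real.sqrt 6 / 2) * Real.exp ((j:ℝ) / 46) := by
    have he1 : (1:ℝ) ≤ Real.exp ((j:ℝ) / 46) := Real.one_le_exp (by positivity)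
    nlinarith [hs23]
  have hexp6 : Real.exp ((j:ℝ) / 46) ^ (6:ℕ) = Real.exp (3 * (j:ℝ) / 23) := by
    rw [← Real.exp_nat_mul]; congr 1; push_cast; ring
  have hn : (n : ℝ) ≤ 4.9158 ^ 6 * Real.exp (3 * (j:ℝ) / 23) := by
    have h2 : (n : ℝ) * (Real.sqrt 6 / 2) ^ 6 ≤
        (4.9158 ^ 6 * Real.exp (3 * (j:ℝ) / 23)) * (Real.sqrt 6 / 2) ^ 6 := by
      calc (n : ℝ) * (Real.sqrt 6 / 2) ^ 6
          ≤ (Real.sqrt (23 + (j:ℝ)) + Real.sqrt 6 / 2) ^ 6 := by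
            convert h using 3 <;> push_cast <;> ring
        _ ≤ ((Real.sqrt 23 + Real.sqrt 6 / 2) * Real.exp ((j:ℝ) / 46)) ^ 6 :=
            pow_le_pow_left₀ (by positivity) hstep1 6
        _ = (Real.sqrt 23 + Real.sqrt 6 / 2) ^ 6 * Real.exp ((j:ℝ) / 46) ^ 6 := mul_pow _ _ 6
        _ ≤ (4.9158 * (Real.sqrt 6 / 2)) ^ 6 * Real.exp ((j:ℝ) / 46) ^ 6 := by
            apply mul_le_mul_of_nonneg_right (pow_le_pow_left₀ (by positivity) hbr 6)
              (by positivity)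
        _ = (4.9158 ^ 6 * Real.exp (3 * (j:ℝ) / 23)) * (Real.sqrt 6 / 2) ^ 6 := by
            rw [mul_pow, hexp6]; ring
    exact le_of_mul_le_mul_right h2 hR0
  have hsplit : Real.exp (-((Real.pi - 2 / 7) * (22 + (j:ℝ)))) =
      Real.exp (-((Real.pi - 2 / 7) * 22)) * Real.exp (-((Real.pi - 2 / 7) * j)) := by
    rw [← Real.exp_add]; congr 1; ring
  have hpowj : Real.exp (3 * (j:ℝ) / 23) * Real.exp (-((Real.pi - 2 / 7) * j)) =
      Real.exp (3 / 23 - (Real.pi - 2 / 7)) ^ j := by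
    rw [← Real.exp_add, ← Real.exp_nat_mul]; congr 1; ring
  calc (n : ℝ) * Real.exp (-((Real.pi - 2 / 7) * (22 + (j:ℝ))))
      ≤ (4.9158 ^ 6 * Real.exp (3 * (j:ℝ) / 23)) *
        (Real.exp (-((Real.pi - 2 / 7) * 22)) * Real.exp (-((Real.pi - 2 / 7) * j))) := by
        rw [hsplit]
        exact mul_le_mul_of_nonneg_right hn (by positivity)
    _ = (4.9158 ^ 6 * Real.exp (-((Real.pi - 2 / 7) * 22))) *
        (Real.exp (3 * (j:ℝ) / 23) * Real.exp (-((Real.pi - 2 / 7) * j))) := by ring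
    _ = (4.9158 ^ 6 * Real.exp (-((Real.pi - 2 / 7) * 22))) *
        Real.exp (3 / 23 - (Real.pi - 2 / 7)) ^ j := by rw [hpowj]
    _ ≤ (4.9158 ^ 6 * 5.2e-28) * 0.066 ^ j := by
        apply mul_le_mul (mul_le_mul_of_nonneg_left exp22 (by positivity))
          (pow_le_pow_left₀ (Real.exp_nonneg _) qexp j) (by positivity) (by positivity)
    _ ≤ 7.34e-24 * 0.066 ^ j := by
        apply mul_le_mul_of_nonneg_right _ (by positivity)
        norm_num

theorem stmt_10 (L : Submodule ℤ (EuclideanSpace ℝ (Fin 6)))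
    (hmin : ∀ x ∈ L, x ≠ 0 → (6 : ℝ) ≤ ‖x‖ ^ 2) :
    ∑' x : {x : EuclideanSpace ℝ (Fin 6) // x ∈ L ∧ (22 : ℝ) ≤ ‖x‖ ^ 2},
        Real.exp (-(Real.pi - 2 / 7) * ‖(x : EuclideanSpace ℝ (Fin 6))‖ ^ 2) < 1e-23 := by
  classical
  set σ := {x : EuclideanSpace ℝ (Fin 6) // x ∈ L ∧ (22 : ℝ) ≤ ‖x‖ ^ 2} with hσ
  set f : σ → ℝ := fun x =>
    Real.exp (-(Real.pi - 2 / 7) * ‖(x : EuclideanSpace ℝ (Fin 6))‖ ^ 2) with hf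
  have key : ∀ u : Finset σ, ∑ x ∈ u, f x ≤ 7.9e-24 := by
    intro u
    set J : σ → ℕ := fun x => ⌊‖(x : EuclideanSpace ℝ (Fin 6))‖ ^ 2⌋₊ - 22 with hJ
    have hmaps : ∀ x ∈ u, J x ∈ u.image J := fun x hx => Finset.mem_image_of_mem J hx
    rw [← Finset.sum_fiberwise_of_maps_to hmaps]
    have hfiber : ∀ j ∈ u.image J,
        (∑ x ∈ u.filter (fun x => J x = j), f x) ≤ 7.34e-24 * 0.066 ^ j := by
      intro j _
      set v := u.filter (fun x => J x = j) with hv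
      have hmem : ∀ x ∈ v, 22 + (j:ℝ) ≤ ‖(x : EuclideanSpace ℝ (Fin 6))‖ ^ 2 ∧
          ‖(x : EuclideanSpace ℝ (Fin 6))‖ ^ 2 < 23 + (j:ℝ) := by
        intro x hx
        obtain ⟨hxu, hxJ⟩ := Finset.mem_filter.1 hx
        have h22 : (22:ℝ) ≤ ‖(x : EuclideanSpace ℝ (Fin 6))‖ ^ 2 := x.2.2
        have hfl : 22 ≤ ⌊‖(x : EuclideanSpace ℝ (Fin 6))‖ ^ 2⌋₊ :=
          Nat.le_floor (by exact_mod_cast h22)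
        have hJx : ⌊‖(x : EuclideanSpace ℝ (Fin 6))‖ ^ 2⌋₊ = 22 + j := by
          simp only [hJ] at hxJ; omega
        constructor
        · have h := Nat.floor_le (show (0:ℝ) ≤ ‖(x : EuclideanSpace ℝ (Fin 6))‖ ^ 2 by positivity)
          rw [hJx] at h; push_cast at h; linarith
        · have h := Nat.lt_floor_add_one (‖(x : EuclideanSpace ℝ (Fin 6))‖ ^ 2)
          rw [hJx] at h; push_cast at h; linarith
      have hpt : ∀ x ∈ v, f x ≤ Real.exp (-((Real.pi - 2 / 7) * (22 + (j:ℝ)))) := by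
        intro x hx
        have hπ : (3.141592:ℝ) < Real.pi := Real.pi_gt_d6
        have hc : (0:ℝ) ≤ Real.pi - 2 / 7 := by norm_num; linarith
        apply Real.exp_le_exp.2
        have hge := (hmem x hx).1
        nlinarith
      have hsum1 : (∑ x ∈ v, f x) ≤
          (v.card : ℝ) * Real.exp (-((Real.pi - 2 / 7) * (22 + (j:ℝ)))) := by
        have h := Finset.sum_le_card_nsmul v f _ hpt
        simpa [nsmul_eq_mul] using h
      set G : Finset (EuclideanSpace ℝ (Fin 6)) :=
        v.image Subtype.val with hG
      have hcardG : G.card = v.card := by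
        rw [hG]; exact Finset.card_image_of_injective v Subtype.val_injective
      have hsep : ∀ a ∈ G, ∀ b ∈ G, a ≠ b → Real.sqrt 6 ≤ dist a b := by
        intro a ha b hb hab
        obtain ⟨x, hxv, rfl⟩ := Finset.mem_image.1 ha
        obtain ⟨y, hyv, rfl⟩ := Finset.mem_image.1 hb
        have hxy : (x : EuclideanSpace ℝ (Fin 6)) - y ∈ L := Submodule.sub_mem L x.2.1 y.2.1
        have hne : (x : EuclideanSpace ℝ (Fin 6)) - y ≠ 0 := sub_ne_zero.2 hab
        have h6 : (6:ℝ) ≤ ‖(x : EuclideanSpace ℝ (Fin 6)) - y‖ ^ 2 := hmin _ hxy hne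
        rw [dist_eq_norm]
        calc Real.sqrt 6 ≤ Real.sqrt (‖(x : EuclideanSpace ℝ (Fin 6)) - y‖ ^ 2) :=
              Real.sqrt_le_sqrt h6
          _ = ‖(x : EuclideanSpace ℝ (Fin 6)) - y‖ := Real.sqrt_sq (norm_nonneg _)
      have hin : ∀ a ∈ G, ‖a‖ < Real.sqrt (23 + (j:ℝ)) := by
        intro a ha
        obtain ⟨x, hxv, rfl⟩ := Finset.mem_image.1 ha
        have h2 := (hmem x hxv).2
        calc ‖(x : EuclideanSpace ℝ (Fin 6))‖
            = Real.sqrt (‖(x : EuclideanSpace ℝ (Fin 6))‖ ^ 2) :=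
              (Real.sqrt_sq (norm_nonneg _)).symm
          _ < Real.sqrt (23 + (j:ℝ)) := Real.sqrt_lt_sqrt (by positivity) h2
      have hcount := count_lemma G (Real.sqrt (23 + (j:ℝ))) (Real.sqrt_nonneg _) hsep hin
      rw [hcardG] at hcount
      have hsb := shell_bound j v.card (by exact_mod_cast hcount)
      exact hsum1.trans hsb
    calc ∑ j ∈ u.image J, ∑ x ∈ u.filter (fun x => J x = j), f x
        ≤ ∑ j ∈ u.image J, 7.34e-24 * 0.066 ^ j := Finset.sum_le_sum hfiber
      _ = 7.34e-24 * ∑ j ∈ u.image J, (0.066:ℝ) ^ j := by rw [Finset.mul_sum]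
      _ ≤ 7.34e-24 * (1 - 0.066)⁻¹ := by
          apply mul_le_mul_of_nonneg_left _ (by norm_num)
          calc ∑ j ∈ u.image J, (0.066:ℝ) ^ j ≤ ∑' j : ℕ, (0.066:ℝ) ^ j :=
                Summable.sum_le_tsum _ (fun i _ => by positivity)
                  (summable_geometric_of_lt_one (by norm_num) (by norm_num))
            _ = (1 - 0.066)⁻¹ := tsum_geometric_of_lt_one (by norm_num) (by norm_num)
      _ ≤ 7.9e-24 := by norm_num
  have hnonneg : (0:σ → ℝ) ≤ f := fun x => Real.exp_nonneg _
  have hsummable : Summable f := summable_of_sum_le hnonneg key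
  calc ∑' x : σ, f x ≤ 7.9e-24 := Summable.tsum_le_of_sum_le hsummable key
    _ < 1e-23 := by norm_num
end

section
/- Let K be a cyclic cubic number field with Galois group generated by σ, and let f ∈ O_K be an algebraic integer not in ℤ. Then the set {1, f, σ(f)} is linearly independent over ℝ (equivalently, over ℚ), i.e. K = ℚ(1, f, σ(f)) and these three elements form a ℚ-basis of K. -/
/-!
If `a + b f + c σf = 0` with rational `a, b, c`, applying `σ` twice gives two more relations
in the conjugates `f, σf, σ²f`; eliminating `a` yields `(b² - bc + c²)(f - σf) = 0`.
Since `b² - bc + c² = (b - c/2)² + 3c²/4` is positive definite, `b = c = 0` as soon as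
`σf ≠ f`. Finally `σ` generates the Galois group, so `σf = f` would make `f` rational, hence
(being integral) an integer.
-/

open NumberField

theorem IsGalois.mem_range_algebraMap_of_apply_eq_self {F E : Type*} [Field F] [Field E]
    [Algebra F E] [FiniteDimensional F E] [IsGalois F E] {σ : Gal(E/F)}
    (hσ : ∀ g : Gal(E/F), g ∈ Subgroup.zpowers σ) {x : E} (hx : σ x = x) :
    x ∈ Set.range (algebraMap F E) :=
  (mem_range_algebraMap_iff_fixed x).2 fun g => by
    obtain ⟨k, rfl⟩ := hσ g
    exact MulAction.mem_fixedBy_zpow (g := σ) hx k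

theorem NumberField.RingOfIntegers.exists_intCast_eq_of_mem_range_algebraMap {K : Type*}
    [Field K] [NumberField K] {x : 𝓞 K} (hx : (x : K) ∈ Set.range (algebraMap ℚ K)) :
    ∃ n : ℤ, (x : K) = n := by
  obtain ⟨q, hq⟩ := hx
  have hq_int : IsIntegral ℤ q := by
    rw [← isIntegral_algebraMap_iff (algebraMap ℚ K).injective, hq]
    exact x.isIntegral_coe
  obtain ⟨n, rfl⟩ := IsIntegrallyClosed.isIntegral_iff.mp hq_int
  exact ⟨n, by simp [← hq]⟩

theorem eq_zero_of_sq_sub_mul_add_sq_eq_zero {R : Type*} [CommRing R] [LinearOrder R]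
    [IsStrictOrderedRing R] {b c : R} (h : b ^ 2 - b * c + c ^ 2 = 0) : b = 0 ∧ c = 0 := by
  have hc : c = 0 := by nlinarith [sq_nonneg (2 * b - c), sq_nonneg c]
  subst hc
  exact ⟨by simpa using h, rfl⟩

theorem linearIndependent_one_self_apply_of_pow_three_eq_one {F E : Type*} [Field F]
    [LinearOrder F] [IsStrictOrderedRing F] [CommRing E] [IsDomain E] [Algebra F E]
    {σ : E ≃ₐ[F] E} (hσ : σ ^ 3 = 1) {x : E} (hx : σ x ≠ x) :
    LinearIndependent F ![1, x, σ x] := by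
  have hx3 : σ (σ (σ x)) = x := by
    simpa [pow_succ, AlgEquiv.mul_apply] using congrArg (· x) hσ
  rw [Fintype.linearIndependent_iff]
  intro g hg
  simp only [Fin.sum_univ_three, Matrix.cons_val_zero, Matrix.cons_val_one, Matrix.cons_val_two,
    Matrix.head_cons, Matrix.tail_cons, Algebra.smul_def, mul_one] at hg
  set a := algebraMap F E (g 0)
  set b := algebraMap F E (g 1)
  set c := algebraMap F E (g 2)
  have hg' : a + b * σ x + c * σ (σ x) = 0 := by simpa [a, b, c] using congrArg σ hg
  have hg'' : a + b * σ (σ x) + c * x = 0 := by simpa [a, b, c, hx3] using congrArg σ hg'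
  have hbc : (b ^ 2 - b * c + c ^ 2) * (x - σ x) = 0 := by
    linear_combination (b - c) * hg - b * hg' + c * hg''
  have hbcF : g 1 ^ 2 - g 1 * g 2 + g 2 ^ 2 = 0 := by
    apply FaithfulSMul.algebraMap_injective F E
    simpa [sub_eq_zero, Ne.symm hx] using hbc
  obtain ⟨hb, hc⟩ := eq_zero_of_sq_sub_mul_add_sq_eq_zero hbcF
  have ha : g 0 = 0 := by simpa [a, b, c, hb, hc] using hg
  intro i
  fin_cases i <;> assumption

theorem stmt_13 (K : Type*) [Field K] [NumberField K]
    (hdeg : Module.finrank ℚ K = 3) [IsGalois ℚ K]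
    (σ : K ≃ₐ[ℚ] K) (hgen : ∀ g : K ≃ₐ[ℚ] K, g ∈ Subgroup.zpowers σ)
    (f : 𝓞 K) (hf : ¬ ∃ n : ℤ, (f : K) = (n : K)) :
    LinearIndependent ℚ ![(1 : K), (f : K), σ (f : K)] := by
  have hσ3 : σ ^ 3 = 1 := by
    rw [← hdeg, ← IsGalois.card_aut_eq_finrank, Nat.card_eq_fintype_card]
    exact pow_card_eq_one
  refine linearIndependent_one_self_apply_of_pow_three_eq_one hσ3 fun hfix => hf ?_
  exact RingOfIntegers.exists_intCast_eq_of_mem_range_algebraMap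
    (IsGalois.mem_range_algebraMap_of_apply_eq_self hgen hfix)
end

section
/- Let Λ ⊂ ℝ² be a hexagonal lattice with minimal vector length λ, i.e. Λ = A·(ℤb₁ + ℤb₂) with ‖b₁‖ = ‖b₂‖ = ‖b₂ − b₁‖ = λ, and let F = {α₁b₁ + α₂b₂ : α₁, α₂ ∈ (−1/2, 1/2]} be the fundamental parallelogram. Then for every w ∈ F, the set B(w) = {v ∈ Λ : ‖v − w‖ < λ} has at most 4 elements; moreover B(w) ⊆ {0, v₁, v₂, v₃} with ‖v₁ − w‖ ≥ √3·λ/4, ‖v₂ − w‖ ≥ λ/2 and ‖v₃ − w‖ ≥ √3·λ/2 for appropriate lattice points v₁, v₂, v₃. -/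
/-!
Write `w = a • b₁ + b • b₂`. Since `⟪b₁, b₂⟫ = λ² / 2`, the squared distance from `w` to the
lattice point `m • b₁ + n • b₂` is `λ² Q(m - a, n - b)` with `Q(x, y) = x² + xy + y²`, so everything
reduces to the integer points `(m, n)` with `Q(m - a, n - b) < 1`. As `Q(x, y) ≥ 3x²/4`, these
have `|m|, |n| ≤ 1`, and every `(m, n) ≠ 0` has `Q(m - a, n - b) ≥ 3/16`. The symmetries
`(a, b) ↦ (-a, -b)` and `(a, b) ↦ (b, a)` of `Q` reduce to `|b| ≤ a`, where a short case analysis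
remains. The parallelogram law `Q(u - v) ≤ 2 Q(u) + 2 Q(v)` does the counting: two lattice points
at distance `2λ` are never both close to `w`, and of two points at distance `λ` (resp. `√3 λ`)
the farther one is at distance at least `λ / 2` (resp. `√3 λ / 2`) from `w`.
-/

open scoped RealInnerProductSpace

lemma exists_eq_min_eq_max {α β : Type*} [LinearOrder β] (f : α → β) (x y : α) :
    ∃ u v, (∀ p, p = x ∨ p = y → p = u ∨ p = v) ∧
      f u = min (f x) (f y) ∧ f v = max (f x) (f y) := by
  rcases le_total (f x) (f y) with h | h
  · exact ⟨x, y, fun p hp => hp, (min_eq_left h).symm, (max_eq_right h).symm⟩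
  · exact ⟨y, x, fun p hp => hp.symm, (min_eq_right h).symm, (max_eq_left h).symm⟩

lemma exists_forall_eq_of_not_and {α : Type*} {P : α → Prop} {x y : α} (h : ¬ (P x ∧ P y)) :
    ∃ z, (z = x ∨ z = y) ∧ ∀ p, P p → p = x ∨ p = y → p = z := by
  by_cases hx : P x
  · exact ⟨x, .inl rfl, by rintro p hp (rfl | rfl) <;> tauto⟩
  · exact ⟨y, .inr rfl, by rintro p hp (rfl | rfl) <;> tauto⟩

lemma lt_one_of_mul_sqrt_lt_self {lam x : ℝ} (hlam : 0 ≤ lam) (h : lam * √x < lam) : x < 1 := by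
  have := lt_of_mul_lt_mul_left (h.trans_eq (mul_one lam).symm) hlam
  simpa using (Real.sqrt_lt' one_pos).1 this

lemma mul_le_mul_sqrt_of_sq_le {lam c x : ℝ} (hlam : 0 ≤ lam) (hc : 0 ≤ c) (h : c ^ 2 ≤ x) :
    c * lam ≤ lam * √x := by
  rw [mul_comm, ← Real.sqrt_sq hc]
  exact mul_le_mul_of_nonneg_left (Real.sqrt_le_sqrt h) hlam

lemma ncard_le_four_of_subset {α : Type*} {s : Set α} {a b c d : α} (h : s ⊆ {a, b, c, d}) :
    s.ncard ≤ 4 := by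
  classical
  refine (Set.ncard_le_ncard h (Set.toFinite _)).trans ?_
  rw [← Finset.coe_pair, ← Finset.coe_insert, ← Finset.coe_insert, Set.ncard_coe_finset]
  exact Finset.card_le_four

def hexForm (x y : ℝ) : ℝ := x ^ 2 + x * y + y ^ 2

/-- `lam * √(hexDist a b p)` is the distance from `a • b₁ + b • b₂` to the lattice point with
coordinates `p` (`norm_latticePoint_sub`). -/
def hexDist (a b : ℝ) (p : ℤ × ℤ) : ℝ := hexForm (p.1 - a) (p.2 - b)

/-- `p₁, p₂, p₃` are the coordinates of `v₁, v₂, v₃`; the bounds are the squares of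
`√3/4, 1/2, √3/2`. -/
def HexCover (a b : ℝ) : Prop :=
  ∃ p₁ p₂ p₃ : ℤ × ℤ, (∀ p, hexDist a b p < 1 → p = 0 ∨ p = p₁ ∨ p = p₂ ∨ p = p₃) ∧
    3 / 16 ≤ hexDist a b p₁ ∧ 1 / 4 ≤ hexDist a b p₂ ∧ 3 / 4 ≤ hexDist a b p₃

lemma hexForm_nonneg (x y : ℝ) : 0 ≤ hexForm x y := by
  unfold hexForm; nlinarith [sq_nonneg (x + y)]

lemma hexForm_comm (x y : ℝ) : hexForm x y = hexForm y x := by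
  unfold hexForm; ring

lemma three_quarters_mul_sq_le_hexForm (x y : ℝ) : 3 / 4 * x ^ 2 ≤ hexForm x y := by
  unfold hexForm; nlinarith [sq_nonneg (x + 2 * y)]

lemma hexForm_sub_le (x y x' y' : ℝ) :
    hexForm (x - x') (y - y') ≤ 2 * hexForm x y + 2 * hexForm x' y' := by
  have := hexForm_nonneg (x + x') (y + y')
  unfold hexForm at *; nlinarith

lemma hexDist_neg (a b : ℝ) (p : ℤ × ℤ) : hexDist (-a) (-b) (-p) = hexDist a b p := by
  simp only [hexDist, hexForm, Prod.fst_neg, Prod.snd_neg, Int.cast_neg]; ring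

lemma hexDist_swap (a b : ℝ) (p : ℤ × ℤ) : hexDist b a p.swap = hexDist a b p := by
  simp only [hexDist, Prod.fst_swap, Prod.snd_swap]; exact hexForm_comm _ _

lemma hexForm_sub_le_hexDist (a b : ℝ) (p p' : ℤ × ℤ) :
    hexForm (p.1 - p'.1) (p.2 - p'.2) ≤ 2 * hexDist a b p + 2 * hexDist a b p' := by
  simpa [hexDist] using hexForm_sub_le (p.1 - a) (p.2 - b) (p'.1 - a) (p'.2 - b)

lemma fst_mem_Icc_of_hexDist_lt_one {a b : ℝ} (ha : |a| ≤ 1 / 2) {p : ℤ × ℤ}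
    (hp : hexDist a b p < 1) : p.1 ∈ Set.Icc (-1) 1 := by
  have h : (p.1 - a) ^ 2 < (3 / 2) ^ 2 := by
    have := three_quarters_mul_sq_le_hexForm (p.1 - a) (p.2 - b)
    unfold hexDist at hp
    linarith
  obtain ⟨h₁, h₂⟩ := abs_lt.1 (abs_lt_of_sq_lt_sq h (by norm_num))
  obtain ⟨ha₁, ha₂⟩ := abs_le.1 ha
  have : -2 < p.1 := by exact_mod_cast (by linarith : (-2 : ℝ) < p.1)
  have : p.1 < 2 := by exact_mod_cast (by linarith : (p.1 : ℝ) < 2)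
  constructor <;> omega

lemma mem_Icc_of_hexDist_lt_one {a b : ℝ} (ha : |a| ≤ 1 / 2) (hb : |b| ≤ 1 / 2)
    {p : ℤ × ℤ} (hp : hexDist a b p < 1) : p.1 ∈ Set.Icc (-1) 1 ∧ p.2 ∈ Set.Icc (-1) 1 :=
  ⟨fst_mem_Icc_of_hexDist_lt_one ha hp,
    fst_mem_Icc_of_hexDist_lt_one hb (p := p.swap) ((hexDist_swap a b p).trans_lt hp)⟩

lemma quarter_le_sq_sub {a : ℝ} (ha : |a| ≤ 1 / 2) {m : ℤ} (hm : m ≠ 0) :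
    1 / 4 ≤ (m - a) ^ 2 := by
  have : (1 : ℝ) ≤ |(m : ℝ)| := by exact_mod_cast Int.one_le_abs hm
  have : 1 / 2 ≤ |(m : ℝ) - a| := by
    have := abs_sub_abs_le_abs_sub (m : ℝ) a
    linarith
  nlinarith [sq_abs ((m : ℝ) - a)]

lemma three_sixteenths_le_hexDist {a b : ℝ} (ha : |a| ≤ 1 / 2) (hb : |b| ≤ 1 / 2)
    {p : ℤ × ℤ} (hp : p ≠ 0) : 3 / 16 ≤ hexDist a b p := by
  obtain ⟨m, n⟩ := p
  rcases eq_or_ne m 0 with rfl | hm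
  · have hn : n ≠ 0 := by rintro rfl; exact hp rfl
    have := three_quarters_mul_sq_le_hexForm (n - b) (0 - a)
    have := quarter_le_sq_sub hb hn
    simp only [hexDist, Int.cast_zero]
    rw [hexForm_comm]
    linarith
  · have := three_quarters_mul_sq_le_hexForm (m - a) (n - b)
    have := quarter_le_sq_sub ha hm
    unfold hexDist
    linarith

lemma HexCover.of_equiv {a b a' b' : ℝ} (e : ℤ × ℤ ≃ ℤ × ℤ) (he₀ : e 0 = 0)
    (he : ∀ p, hexDist a' b' (e p) = hexDist a b p) (h : HexCover a' b') : HexCover a b := by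
  obtain ⟨p₁, p₂, p₃, hS, h₁, h₂, h₃⟩ := h
  have he' : ∀ p, hexDist a b (e.symm p) = hexDist a' b' p := fun p => by
    rw [← he, e.apply_symm_apply]
  refine ⟨e.symm p₁, e.symm p₂, e.symm p₃, fun p hp => ?_, by rwa [he'], by rwa [he'],
    by rwa [he']⟩
  rw [← he] at hp
  rw [← e.symm_apply_eq.2 he₀.symm]
  simpa only [Equiv.eq_symm_apply] using hS _ hp

lemma hexCover_of_nonneg {a b : ℝ} (hb : 0 ≤ b) (hba : b ≤ a) (ha : a ≤ 1 / 2) :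
    HexCover a b := by
  have ha' : |a| ≤ 1 / 2 := abs_le.2 ⟨by linarith, ha⟩
  have hb' : |b| ≤ 1 / 2 := abs_le.2 ⟨by linarith, by linarith⟩
  have : 1 ≤ hexDist a b (-1, 0) := by norm_num [hexDist, hexForm]; nlinarith
  have : 1 ≤ hexDist a b (0, -1) := by norm_num [hexDist, hexForm]; nlinarith
  have : 1 ≤ hexDist a b (-1, -1) := by norm_num [hexDist, hexForm]; nlinarith
  have : 1 ≤ hexDist a b (-1, 1) := by norm_num [hexDist, hexForm]; nlinarith
  have h11 : 3 / 4 ≤ hexDist a b (1, 1) := by norm_num [hexDist, hexForm]; nlinarith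
  have h1n : 3 / 4 ≤ hexDist a b (1, -1) := by norm_num [hexDist, hexForm]; nlinarith
  have hnear := hexForm_sub_le_hexDist a b (1, 0) (0, 1)
  have hfar := hexForm_sub_le_hexDist a b (1, 1) (1, -1)
  norm_num [hexForm] at hnear hfar
  obtain ⟨z, hz, hzS⟩ := exists_forall_eq_of_not_and (P := fun p => hexDist a b p < 1)
    (x := (1, 1)) (y := (1, -1)) (fun ⟨h, h'⟩ => by linarith)
  obtain ⟨u, v, huv, hu, hv⟩ := exists_eq_min_eq_max (hexDist a b) (1, 0) (0, 1)
  refine ⟨u, v, z, fun p hp => ?_, ?_, ?_, by rcases hz with rfl | rfl <;> assumption⟩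
  · obtain ⟨m, n⟩ := p
    obtain ⟨⟨hm₁, hm₂⟩, hn₁, hn₂⟩ := mem_Icc_of_hexDist_lt_one ha' hb' hp
    interval_cases m <;> interval_cases n
    all_goals first
      | exact .inl rfl
      | exact absurd hp (not_lt.2 ‹_›)
      | exact .inr ((huv _ (.inl rfl)).imp_right .inl)
      | exact .inr ((huv _ (.inr rfl)).imp_right .inl)
      | exact .inr (.inr (.inr (hzS _ hp (.inl rfl))))
      | exact .inr (.inr (.inr (hzS _ hp (.inr rfl))))
  · rw [hu]
    exact le_min (three_sixteenths_le_hexDist ha' hb' (by decide))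
      (three_sixteenths_le_hexDist ha' hb' (by decide))
  · rw [hv]
    linarith [le_max_left (hexDist a b (1, 0)) (hexDist a b (0, 1)),
      le_max_right (hexDist a b (1, 0)) (hexDist a b (0, 1))]

lemma hexCover_of_nonpos {a b : ℝ} (hb : b ≤ 0) (hba : -b ≤ a) (ha : a ≤ 1 / 2) :
    HexCover a b := by
  have ha' : |a| ≤ 1 / 2 := abs_le.2 ⟨by linarith, ha⟩
  have hb' : |b| ≤ 1 / 2 := abs_le.2 ⟨by linarith, by linarith⟩
  have : 1 ≤ hexDist a b (-1, 0) := by norm_num [hexDist, hexForm]; nlinarith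
  have : 1 ≤ hexDist a b (-1, -1) := by norm_num [hexDist, hexForm]; nlinarith
  have : 1 ≤ hexDist a b (-1, 1) := by norm_num [hexDist, hexForm]; nlinarith
  have : 1 ≤ hexDist a b (1, 1) := by norm_num [hexDist, hexForm]; nlinarith
  have h10 : 1 / 4 ≤ hexDist a b (1, 0) := by norm_num [hexDist, hexForm]; nlinarith
  have h0n : 1 / 4 ≤ hexDist a b (0, -1) := by norm_num [hexDist, hexForm]; nlinarith
  have h01 : 3 / 4 ≤ hexDist a b (0, 1) := by norm_num [hexDist, hexForm]; nlinarith
  have hmid := hexForm_sub_le_hexDist a b (1, 0) (0, -1)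
  have hfar := hexForm_sub_le_hexDist a b (0, 1) (0, -1)
  norm_num [hexForm] at hmid hfar
  obtain ⟨z, hz, hzS⟩ := exists_forall_eq_of_not_and (P := fun p => hexDist a b p < 1)
    (x := (0, 1)) (y := (0, -1)) (fun ⟨h, h'⟩ => by linarith)
  have hz' : 1 / 4 ≤ hexDist a b z ∧ 3 / 4 ≤ max (hexDist a b (1, 0)) (hexDist a b z) := by
    rcases hz with rfl | rfl
    · exact ⟨by linarith, le_max_of_le_right h01⟩
    · refine ⟨h0n, ?_⟩
      linarith [le_max_left (hexDist a b (1, 0)) (hexDist a b (0, -1)),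
        le_max_right (hexDist a b (1, 0)) (hexDist a b (0, -1))]
  obtain ⟨u, v, huv, hu, hv⟩ := exists_eq_min_eq_max (hexDist a b) (1, 0) z
  refine ⟨(1, -1), u, v, fun p hp => ?_, three_sixteenths_le_hexDist ha' hb' (by decide),
    hu ▸ le_min h10 hz'.1, hv ▸ hz'.2⟩
  obtain ⟨m, n⟩ := p
  obtain ⟨⟨hm₁, hm₂⟩, hn₁, hn₂⟩ := mem_Icc_of_hexDist_lt_one ha' hb' hp
  interval_cases m <;> interval_cases n
  all_goals first
    | exact .inl rfl
    | exact .inr (.inl rfl)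
    | exact absurd hp (not_lt.2 ‹_›)
    | exact .inr (.inr (huv _ (.inl rfl)))
    | exact .inr (.inr (huv _ (.inr (hzS _ hp (.inl rfl)))))
    | exact .inr (.inr (huv _ (.inr (hzS _ hp (.inr rfl)))))

lemma hexCover_of_abs_le_self {a b : ℝ} (hba : |b| ≤ a) (ha : a ≤ 1 / 2) : HexCover a b := by
  obtain ⟨hba₁, hba₂⟩ := abs_le.1 hba
  rcases le_total 0 b with hb | hb
  · exact hexCover_of_nonneg hb hba₂ ha
  · exact hexCover_of_nonpos hb (by linarith) ha

lemma hexCover_of_abs_le_abs {a b : ℝ} (hba : |b| ≤ |a|) (ha : |a| ≤ 1 / 2) :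
    HexCover a b := by
  rcases le_total 0 a with ha₀ | ha₀
  · rw [abs_of_nonneg ha₀] at hba ha
    exact hexCover_of_abs_le_self hba ha
  · rw [abs_of_nonpos ha₀] at hba ha
    rw [← abs_neg] at hba
    refine (hexCover_of_abs_le_self hba (by linarith)).of_equiv (Equiv.neg _) neg_zero ?_
    exact hexDist_neg a b

lemma hexCover_of_abs_le {a b : ℝ} (ha : |a| ≤ 1 / 2) (hb : |b| ≤ 1 / 2) : HexCover a b := by
  rcases le_total |b| |a| with h | h
  · exact hexCover_of_abs_le_abs h ha
  · exact (hexCover_of_abs_le_abs h hb).of_equiv (Equiv.prodComm ℤ ℤ) rfl (hexDist_swap a b)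

lemma norm_smul_add_smul {E : Type*} [NormedAddCommGroup E] [InnerProductSpace ℝ E]
    {b₁ b₂ : E} {lam : ℝ} (h₁ : ‖b₁‖ = lam) (h₂ : ‖b₂‖ = lam) (h₁₂ : ‖b₂ - b₁‖ = lam)
    (x y : ℝ) : ‖x • b₁ + y • b₂‖ = lam * √(hexForm x y) := by
  have hinner : ⟪b₁, b₂⟫ = lam ^ 2 / 2 := by
    have := norm_sub_sq_real b₂ b₁
    rw [h₁, h₂, h₁₂, real_inner_comm] at this
    linarith
  have hsq : ‖x • b₁ + y • b₂‖ ^ 2 = lam ^ 2 * hexForm x y := by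
    rw [norm_add_sq_real, norm_smul, norm_smul, real_inner_smul_left, real_inner_smul_right,
      hinner, h₁, h₂, mul_pow, mul_pow, Real.norm_eq_abs, Real.norm_eq_abs, sq_abs, sq_abs]
    unfold hexForm
    ring
  rw [← Real.sqrt_sq (norm_nonneg _), hsq, Real.sqrt_mul (sq_nonneg _),
    Real.sqrt_sq (h₁ ▸ norm_nonneg b₁)]

def latticePoint {E : Type*} [AddCommGroup E] (b₁ b₂ : E) (p : ℤ × ℤ) : E := p.1 • b₁ + p.2 • b₂

@[simp]
lemma latticePoint_zero {E : Type*} [AddCommGroup E] (b₁ b₂ : E) : latticePoint b₁ b₂ 0 = 0 := by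
  simp [latticePoint]

lemma norm_latticePoint_sub {E : Type*} [NormedAddCommGroup E] [InnerProductSpace ℝ E]
    {b₁ b₂ : E} {lam : ℝ} (h₁ : ‖b₁‖ = lam) (h₂ : ‖b₂‖ = lam) (h₁₂ : ‖b₂ - b₁‖ = lam)
    (a b : ℝ) (p : ℤ × ℤ) :
    ‖latticePoint b₁ b₂ p - (a • b₁ + b • b₂)‖ = lam * √(hexDist a b p) := by
  rw [hexDist, ← norm_smul_add_smul h₁ h₂ h₁₂, sub_smul, sub_smul, Int.cast_smul_eq_zsmul,
    Int.cast_smul_eq_zsmul, latticePoint]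
  congr 1
  abel

theorem stmt_17_general (b₁ b₂ : EuclideanSpace ℝ (Fin 2)) (lam : ℝ)
    (hb₁ : ‖b₁‖ = lam) (hb₂ : ‖b₂‖ = lam) (hb₁₂ : ‖b₂ - b₁‖ = lam)
    (Λ : Set (EuclideanSpace ℝ (Fin 2)))
    (hΛ : Λ = {v | ∃ m n : ℤ, v = m • b₁ + n • b₂})
    (w : EuclideanSpace ℝ (Fin 2))
    (hw : ∃ α₁ α₂ : ℝ, α₁ ∈ Set.Ioc (-(1 : ℝ) / 2) (1 / 2) ∧
      α₂ ∈ Set.Ioc (-(1 : ℝ) / 2) (1 / 2) ∧ w = α₁ • b₁ + α₂ • b₂) :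
    Set.ncard {v ∈ Λ | ‖v - w‖ < lam} ≤ 4 ∧
    ∃ v₁ v₂ v₃, v₁ ∈ Λ ∧ v₂ ∈ Λ ∧ v₃ ∈ Λ ∧
      {v ∈ Λ | ‖v - w‖ < lam} ⊆ {0, v₁, v₂, v₃} ∧
      Real.sqrt 3 * lam / 4 ≤ ‖v₁ - w‖ ∧ lam / 2 ≤ ‖v₂ - w‖ ∧
      Real.sqrt 3 * lam / 2 ≤ ‖v₃ - w‖ := by
  obtain ⟨a, b, ⟨ha₁, ha₂⟩, ⟨hb₁', hb₂'⟩, rfl⟩ := hw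
  obtain ⟨p₁, p₂, p₃, hS, h₁, h₂, h₃⟩ :=
    hexCover_of_abs_le (abs_le.2 ⟨by linarith, ha₂⟩) (abs_le.2 ⟨by linarith, hb₂'⟩)
  have hlam : 0 ≤ lam := hb₁ ▸ norm_nonneg b₁
  have hdist := norm_latticePoint_sub hb₁ hb₂ hb₁₂ a b
  have hmem : ∀ p, latticePoint b₁ b₂ p ∈ Λ := fun p => hΛ ▸ ⟨p.1, p.2, rfl⟩
  have hsub : {v ∈ Λ | ‖v - (a • b₁ + b • b₂)‖ < lam} ⊆
      latticePoint b₁ b₂ '' {0, p₁, p₂, p₃} := by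
    rintro _ ⟨hv, hvw⟩
    obtain ⟨m, n, rfl⟩ := hΛ ▸ hv
    exact ⟨(m, n), hS _ (lt_one_of_mul_sqrt_lt_self hlam (hdist (m, n) ▸ hvw)), rfl⟩
  simp only [Set.image_insert_eq, Set.image_singleton, latticePoint_zero] at hsub
  refine ⟨ncard_le_four_of_subset hsub, _, _, _, hmem p₁, hmem p₂, hmem p₃, hsub, ?_, ?_, ?_⟩
  · rw [hdist, mul_div_right_comm]
    exact mul_le_mul_sqrt_of_sq_le hlam (by positivity) (by rw [div_pow, Real.sq_sqrt] <;> linarith)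
  · rw [hdist, div_eq_mul_one_div, mul_comm]
    exact mul_le_mul_sqrt_of_sq_le hlam (by positivity) (by linarith)
  · rw [hdist, mul_div_right_comm]
    exact mul_le_mul_sqrt_of_sq_le hlam (by positivity) (by rw [div_pow, Real.sq_sqrt] <;> linarith)

theorem stmt_17 (b₁ b₂ : EuclideanSpace ℝ (Fin 2)) (lam : ℝ) (hlam : 0 < lam)
    (hb₁ : ‖b₁‖ = lam) (hb₂ : ‖b₂‖ = lam) (hb₁₂ : ‖b₂ - b₁‖ = lam)
    (Λ : Set (EuclideanSpace ℝ (Fin 2)))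
    (hΛ : Λ = {v | ∃ m n : ℤ, v = m • b₁ + n • b₂})
    (hmin : ∀ v ∈ Λ, v ≠ 0 → lam ≤ ‖v‖)
    (w : EuclideanSpace ℝ (Fin 2))
    (hw : ∃ α₁ α₂ : ℝ, α₁ ∈ Set.Ioc (-(1 : ℝ) / 2) (1 / 2) ∧
      α₂ ∈ Set.Ioc (-(1 : ℝ) / 2) (1 / 2) ∧ w = α₁ • b₁ + α₂ • b₂) :
    Set.ncard {v ∈ Λ | ‖v - w‖ < lam} ≤ 4 ∧
    ∃ v₁ v₂ v₃, v₁ ∈ Λ ∧ v₂ ∈ Λ ∧ v₃ ∈ Λ ∧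
      {v ∈ Λ | ‖v - w‖ < lam} ⊆ {0, v₁, v₂, v₃} ∧
      Real.sqrt 3 * lam / 4 ≤ ‖v₁ - w‖ ∧ lam / 2 ≤ ‖v₂ - w‖ ∧
      Real.sqrt 3 * lam / 2 ≤ ‖v₃ - w‖ :=
  stmt_17_general b₁ b₂ lam hb₁ hb₂ hb₁₂ Λ hΛ w hw
end

section
/- Let L be a lattice in ℝ⁶ all of whose nonzero vectors have squared length at least 6, let w ∈ ℝ with 0 < w < 0.24163, and set ξ = π − 2πw − 2/7. Then ∑_{x ∈ L, ‖x‖² ≥ 22} e^{−ξ‖x‖²} < 2.19277·10⁻⁹. -/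
/-!
Since `w < 0.24163`, the exponent `ξ` is at least `4/3`, so it suffices to bound
`∑ exp (-(4/3) ‖p‖²)` over the lattice points with `‖p‖² ≥ 22`.

Around every such point `p` put the solid cylinder with axis `ℝ p`, centred at `p`, of half-length
`0.3` and radius `1.187`. It lies in the ball of radius `√(0.3² + 1.187²) < √6 / 2` about `p`, so
the cylinders of distinct lattice points are disjoint. Being thin in the radial direction, they all
avoid the ball of radius `4.39 ≤ √22 - 0.3`, and those with `‖p‖² < T` stay inside the ball of
radius `√(1.064 T + 2.906)`. Comparing volumes in dimension six gives
`#{p : ‖p‖² < T} ≤ 0.6944 ((1.064 T + 2.906)³ - 4.39⁶)`.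

The sum is then cut into unit shells: with `z = exp (-4/3)` and `t p = ⌊‖p‖² - 22⌋`, each term is
at most `z²² z^{t p}`, and `∑ₚ z^{t p} = (1 - z) ∑ᵢ #{p : t p ≤ i} zⁱ`. By Bernoulli's inequality
the cubic count is dominated by a geometric sequence, and the resulting geometric series are summed
in closed form.
-/

open MeasureTheory Metric Module Real Finset
open scoped Nat RealInnerProductSpace

section SolidCylinder

variable {E : Type*} [NormedAddCommGroup E] [InnerProductSpace ℝ E]

def solidCylinder (u : E) (c h r : ℝ) : Set E :=
  {y | |⟪u, y⟫ - c| ≤ h ∧ ‖y - ⟪u, y⟫ • u‖ ≤ r}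

theorem norm_sub_smul_sq_of_norm_eq_one {u : E} (hu : ‖u‖ = 1) (y : E) (c : ℝ) :
    ‖y - c • u‖ ^ 2 = (⟪u, y⟫ - c) ^ 2 + ‖y - ⟪u, y⟫ • u‖ ^ 2 := by
  simp only [norm_sub_sq_real, inner_smul_right, norm_smul, hu, real_inner_comm y u,
    Real.norm_eq_abs, mul_one, sq_abs]
  ring

theorem solidCylinder_subset_closedBall {u : E} (hu : ‖u‖ = 1) (c h r : ℝ) :
    solidCylinder u c h r ⊆ closedBall (c • u) √(h ^ 2 + r ^ 2) := by
  rintro y ⟨hax, hrad⟩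
  rw [mem_closedBall, dist_eq_norm]
  refine Real.le_sqrt_of_sq_le ?_
  rw [norm_sub_smul_sq_of_norm_eq_one hu, ← sq_abs (⟪u, y⟫ - c)]
  gcongr

theorem sub_le_norm_of_mem_solidCylinder {u y : E} (hu : ‖u‖ = 1) {c h r : ℝ}
    (hy : y ∈ solidCylinder u c h r) : c - h ≤ ‖y‖ :=
  calc c - h ≤ ⟪u, y⟫ := by linarith [(abs_le.mp hy.1).1]
    _ ≤ ‖y‖ := by simpa [hu] using real_inner_le_norm u y

theorem norm_le_of_mem_solidCylinder {u y : E} (hu : ‖u‖ = 1) {c h r : ℝ} (hc : 0 ≤ c)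
    (hy : y ∈ solidCylinder u c h r) : ‖y‖ ≤ √((c + h) ^ 2 + r ^ 2) := by
  obtain ⟨hax, hrad⟩ := hy
  have hax' := abs_le.mp hax
  refine Real.le_sqrt_of_sq_le ?_
  have hpyth := norm_sub_smul_sq_of_norm_eq_one hu y 0
  rw [zero_smul, sub_zero, sub_zero] at hpyth
  rw [hpyth]
  exact add_le_add (sq_le_sq' (by linarith) (by linarith)) (pow_le_pow_left₀ (norm_nonneg _) hrad 2)

theorem measurableSet_solidCylinder [MeasurableSpace E] [BorelSpace E] (u : E) (c h r : ℝ) :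
    MeasurableSet (solidCylinder u c h r) :=
  ((isClosed_le (f := fun y => |⟪u, y⟫ - c|) (by fun_prop) continuous_const).inter
    (isClosed_le (f := fun y => ‖y - ⟪u, y⟫ • u‖) (by fun_prop) continuous_const)).measurableSet

-- The isometry `E ≃ ℝ ∙ u × (ℝ ∙ u)ᗮ` turns the cylinder into a product of an interval and a ball.
theorem volume_solidCylinder [FiniteDimensional ℝ E] [MeasurableSpace E] [BorelSpace E]
    {u : E} (hu : ‖u‖ = 1) (c h r : ℝ) :
    volume (solidCylinder u c h r) =
      ENNReal.ofReal (2 * h) * volume (closedBall (0 : (ℝ ∙ u)ᗮ) r) := by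
  set K := ℝ ∙ u
  set S : Set K := {k | |⟪u, (k : E)⟫ - c| ≤ h}
  have hS : MeasurableSet S := (isClosed_le (by fun_prop) continuous_const).measurableSet
  have hφ : MeasurePreserving (fun y => WithLp.ofLp (K.orthogonalDecomposition y)) :=
    (WithLp.volume_preserving_ofLp K Kᗮ).comp K.orthogonalDecomposition.measurePreserving
  have hcyl : solidCylinder u c h r =
      (fun y => WithLp.ofLp (K.orthogonalDecomposition y)) ⁻¹' (S ×ˢ closedBall 0 r) := by
    ext y
    simp [solidCylinder, S, K, Submodule.orthogonalProjectionOnto_orthogonal,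
      Submodule.starProjection_unit_singleton ℝ hu, inner_smul_right, hu]
  set f := LinearIsometryEquiv.toSpanUnitSingleton (𝕜 := ℝ) u hu
  have hfS : f ⁻¹' S = Set.Icc (c - h) (c + h) := by
    ext t
    have ht : ⟪u, t • u⟫ = t := by simp [inner_smul_right, hu]
    change |⟪u, t • u⟫ - c| ≤ h ↔ _
    rw [ht, abs_le, Set.mem_Icc]
    constructor <;> rintro ⟨h₁, h₂⟩ <;> constructor <;> linarith
  have hSvol : volume S = ENNReal.ofReal (2 * h) := by
    rw [← f.measurePreserving.measure_preimage hS.nullMeasurableSet, hfS, Real.volume_Icc]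
    congr 1
    ring
  rw [hcyl, hφ.measure_preimage (hS.prod measurableSet_closedBall).nullMeasurableSet,
    Measure.volume_eq_prod, Measure.prod_prod, hSvol]

theorem volume_solidCylinder_of_finrank_eq [FiniteDimensional ℝ E] [MeasurableSpace E]
    [BorelSpace E] {k : ℕ} (hE : finrank ℝ E = 2 * k + 2) {u : E} (hu : ‖u‖ = 1) (c h r : ℝ) :
    volume (solidCylinder u c h r) = ENNReal.ofReal (2 * h) *
      (ENNReal.ofReal r ^ (2 * k + 1) * ENNReal.ofReal (π ^ k * 2 ^ (k + 1) / (2 * k + 1)‼)) := by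
  have hK : finrank ℝ (ℝ ∙ u)ᗮ = 2 * k + 1 := by
    have := (ℝ ∙ u).finrank_add_finrank_orthogonal
    rw [finrank_span_singleton (norm_ne_zero_iff.mp (by rw [hu]; exact one_ne_zero)), hE] at this
    omega
  rw [volume_solidCylinder hu, InnerProductSpace.volume_closedBall_of_dim_odd hK, hK]

end SolidCylinder

theorem card_mul_add_measure_le {α ι : Type*} [MeasurableSpace α] (μ : Measure α) (s : Finset ι)
    {S : ι → Set α} {A B : Set α} {V : ENNReal} (hS : ∀ i ∈ s, MeasurableSet (S i))
    (hV : ∀ i ∈ s, μ (S i) = V) (hdisj : (s : Set ι).PairwiseDisjoint S)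
    (hSA : ∀ i ∈ s, S i ⊆ A) (hBA : B ⊆ A) (hBS : ∀ i ∈ s, Disjoint B (S i)) :
    #s * V + μ B ≤ μ A := by
  have hU : μ (⋃ i ∈ s, S i) = #s * V := by
    rw [measure_biUnion_finset hdisj hS, sum_congr rfl hV, sum_const, nsmul_eq_mul]
  rw [← hU, add_comm, ← measure_union (Set.disjoint_iUnion₂_right.mpr hBS)
    (s.measurableSet_biUnion hS)]
  exact measure_mono (Set.union_subset hBA (Set.iUnion₂_subset hSA))

theorem card_mul_add_le_of_pairwise_lt_dist {E : Type*} [NormedAddCommGroup E]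
    [InnerProductSpace ℝ E] [FiniteDimensional ℝ E] {k : ℕ} (hE : finrank ℝ E = 2 * k + 2)
    {G : Finset E} {h r R ρ : ℝ} (hh : 0 ≤ h) (hr : 0 ≤ r) (hR : 0 < R) (hRρ : R ≤ ρ)
    (hsep : (G : Set E).Pairwise fun p q => 2 * √(h ^ 2 + r ^ 2) < dist p q)
    (hin : ∀ p ∈ G, R + h ≤ ‖p‖) (hout : ∀ p ∈ G, √((‖p‖ + h) ^ 2 + r ^ 2) ≤ ρ) :
    #G * (2 * h * (r ^ (2 * k + 1) * (π ^ k * 2 ^ (k + 1) / (2 * k + 1)‼))) +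
        R ^ (2 * k + 2) * (π ^ (k + 1) / (k + 1)!) ≤
      ρ ^ (2 * k + 2) * (π ^ (k + 1) / (k + 1)!) := by
  borelize E
  have : Nontrivial E := Module.nontrivial_of_finrank_pos (R := ℝ) (by omega)
  have hp0 : ∀ p ∈ G, p ≠ 0 := fun p hp => norm_pos_iff.mp (by linarith [hin p hp])
  have hu : ∀ p ∈ G, ‖‖p‖⁻¹ • p‖ = 1 := fun p hp => norm_smul_inv_norm (hp0 p hp)
  have key := card_mul_add_measure_le volume G
    (S := fun p => solidCylinder (‖p‖⁻¹ • p) ‖p‖ h r) (A := closedBall 0 ρ) (B := ball 0 R)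
    (fun p _ => measurableSet_solidCylinder _ _ _ _)
    (fun p hp => volume_solidCylinder_of_finrank_eq hE (hu p hp) _ _ _)
    (fun p hp q hq hpq => by
      refine (closedBall_disjoint_closedBall ?_).mono
        (solidCylinder_subset_closedBall (hu p hp) _ _ _)
        (solidCylinder_subset_closedBall (hu q hq) _ _ _)
      rw [smul_inv_smul₀ (norm_ne_zero_iff.mpr (hp0 p hp)),
        smul_inv_smul₀ (norm_ne_zero_iff.mpr (hp0 q hq)), ← two_mul]
      exact hsep hp hq hpq)
    (fun p hp y hy => mem_closedBall_zero_iff.mpr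
      ((norm_le_of_mem_solidCylinder (hu p hp) (norm_nonneg p) hy).trans (hout p hp)))
    (ball_subset_closedBall.trans (closedBall_subset_closedBall hRρ))
    (fun p hp => Set.disjoint_left.mpr fun y hyB hyS => by
      have := sub_le_norm_of_mem_solidCylinder (hu p hp) hyS
      rw [mem_ball_zero_iff] at hyB
      linarith [hin p hp])
  rw [InnerProductSpace.volume_ball_of_dim_even (k := k + 1) (by rw [hE]; ring),
    InnerProductSpace.volume_closedBall_of_dim_even (k := k + 1) (by rw [hE]; ring), hE] at key
  have hρ : 0 ≤ ρ := hR.le.trans hRρ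
  refine (ENNReal.ofReal_le_ofReal_iff (by positivity)).mp ?_
  simpa (disch := positivity) only [ENNReal.ofReal_add, ENNReal.ofReal_mul, ENNReal.ofReal_pow,
    ENNReal.ofReal_natCast] using key

section LayerCake

theorem hasSum_ite_le_geometric {z : ℝ} (hz0 : 0 ≤ z) (hz1 : z < 1) (t : ℕ) :
    HasSum (fun i => if t ≤ i then z ^ i else 0) (z ^ t / (1 - z)) := by
  rw [← hasSum_nat_add_iff' t]
  have hhead : ∑ i ∈ range t, (if t ≤ i then z ^ i else 0) = 0 :=
    sum_eq_zero fun i hi => if_neg (not_le.mpr (mem_range.mp hi))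
  simp only [le_add_iff_nonneg_left, zero_le, if_true, hhead, sub_zero, pow_add]
  simpa [div_eq_mul_inv, mul_comm] using (hasSum_geometric_of_lt_one hz0 hz1).mul_left (z ^ t)

theorem hasSum_card_filter_le_mul_pow {α : Type*} (s : Finset α) (t : α → ℕ) {z : ℝ}
    (hz0 : 0 ≤ z) (hz1 : z < 1) :
    HasSum (fun i => (#{p ∈ s | t p ≤ i} : ℝ) * z ^ i) ((∑ p ∈ s, z ^ t p) / (1 - z)) := by
  rw [sum_div]
  convert hasSum_sum fun p _ => hasSum_ite_le_geometric hz0 hz1 (t p) using 2 with i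
  rw [← sum_filter, sum_const, nsmul_eq_mul]

theorem sum_pow_le_of_card_filter_le {α : Type*} (s : Finset α) (t : α → ℕ) {z g C D : ℝ}
    (hz0 : 0 ≤ z) (hz1 : z < 1) (hg : 0 ≤ g) (hzg : z * g < 1)
    (hcard : ∀ i, (#{p ∈ s | t p ≤ i} : ℝ) ≤ C * g ^ (i + 1) - D) :
    ∑ p ∈ s, z ^ t p ≤ (1 - z) * (C * g / (1 - z * g)) - D := by
  have hbound : HasSum (fun i : ℕ => (C * g ^ (i + 1) - D) * z ^ i)
      (C * g * (1 - z * g)⁻¹ - D * (1 - z)⁻¹) := by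
    have h₁ := (hasSum_geometric_of_lt_one (mul_nonneg hz0 hg) hzg).mul_left (C * g)
    have h₂ := (hasSum_geometric_of_lt_one hz0 hz1).mul_left D
    exact (h₁.sub h₂).congr_fun fun i => by ring
  have hle := hasSum_le (fun i => mul_le_mul_of_nonneg_right (hcard i) (pow_nonneg hz0 i))
    (hasSum_card_filter_le_mul_pow s t hz0 hz1) hbound
  have h1z : 0 < 1 - z := sub_pos.mpr hz1
  rw [div_le_iff₀ h1z] at hle
  calc ∑ p ∈ s, z ^ t p ≤ (C * g * (1 - z * g)⁻¹ - D * (1 - z)⁻¹) * (1 - z) := hle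
    _ = (1 - z) * (C * g / (1 - z * g)) - D := by field_simp

end LayerCake

theorem exp_neg_mul_le_exp_neg_pow_floor {q s : ℝ} (hq : 0 ≤ q) (hs : 0 ≤ s) :
    exp (-q * s) ≤ exp (-q) ^ ⌊s⌋₊ := by
  rw [← Real.exp_nat_mul]
  exact Real.exp_le_exp.mpr (by nlinarith [Nat.floor_le hs])

theorem exp_neg_four_thirds_le : exp (-(4 / 3)) ≤ 0.264 := by
  have h := Real.sum_le_exp_of_nonneg (x := 4 / 3) (by norm_num) 7
  norm_num [sum_range_succ, Nat.factorial] at h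
  rw [Real.exp_neg]
  exact inv_le_of_inv_le₀ (by norm_num) (by linarith)

section Lattice

variable {E : Type*} [NormedAddCommGroup E] [InnerProductSpace ℝ E] [FiniteDimensional ℝ E]
  {L : Submodule ℤ E} {G : Finset E}

theorem card_le_of_forall_norm_sq_lt (hE : finrank ℝ E = 6)
    (hmin : ∀ x ∈ L, x ≠ 0 → (6 : ℝ) ≤ ‖x‖ ^ 2) (hGL : ∀ p ∈ G, p ∈ L)
    (hG : ∀ p ∈ G, (22 : ℝ) ≤ ‖p‖ ^ 2) {T : ℝ} (hT : 22 ≤ T) (hGT : ∀ p ∈ G, ‖p‖ ^ 2 < T) :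
    (#G : ℝ) ≤ 0.6944 * ((1.064 * T + 2.906) ^ 3 - 4.39 ^ 6) := by
  have hy : (0 : ℝ) ≤ 1.064 * T + 2.906 := by linarith
  -- `(4.39 + 0.3)² ≤ 22`, and `(x + 0.3)² + 1.187² ≤ 1.064 x² + 2.906` for all `x`.
  have key := card_mul_add_le_of_pairwise_lt_dist (k := 2) hE (G := G) (h := 0.3) (r := 1.187)
    (R := 4.39) (ρ := √(1.064 * T + 2.906)) (by norm_num) (by norm_num) (by norm_num)
    (Real.le_sqrt_of_sq_le (by linarith))
    (fun p hp q hq hpq => by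
      have h6 := hmin (p - q) (L.sub_mem (hGL p hp) (hGL q hq)) (sub_ne_zero.mpr hpq)
      refine lt_of_pow_lt_pow_left₀ 2 dist_nonneg ?_
      rw [dist_eq_norm, mul_pow, Real.sq_sqrt (by norm_num)]
      linarith)
    (fun p hp => by nlinarith [hG p hp, norm_nonneg p])
    (fun p hp => Real.sqrt_le_sqrt (by nlinarith [hGT p hp, norm_nonneg p]))
  have hρ : √(1.064 * T + 2.906) ^ (2 * 2 + 2) = (1.064 * T + 2.906) ^ 3 := by
    rw [show 2 * 2 + 2 = 2 * 3 from rfl, pow_mul, Real.sq_sqrt hy]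
  rw [hρ] at key
  set Y := (1.064 * T + 2.906) ^ 3
  have hR : (4.39 : ℝ) ^ 6 ≤ Y :=
    calc (4.39 : ℝ) ^ 6 = (4.39 ^ 2) ^ 3 := by norm_num
      _ ≤ Y := pow_le_pow_left₀ (by norm_num) (by linarith) 3
  norm_num [Nat.doubleFactorial, Nat.factorial] at key
  have hcyl : (#G * (3 / 5 * (1.187 ^ 5 * (8 / 15)))) * π ^ 2 ≤
      ((Y - 4.39 ^ 6) * (π / 6)) * π ^ 2 := by
    linarith
  have hcyl' := le_of_mul_le_mul_right hcyl (by positivity)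
  have hπ : (Y - 4.39 ^ 6) * (π / 6) ≤ (Y - 4.39 ^ 6) * (3.1416 / 6) :=
    mul_le_mul_of_nonneg_left (by linarith [Real.pi_lt_d4]) (by linarith)
  norm_num at hcyl' hπ ⊢
  linarith

theorem card_filter_floor_le (hE : finrank ℝ E = 6)
    (hmin : ∀ x ∈ L, x ≠ 0 → (6 : ℝ) ≤ ‖x‖ ^ 2) (hGL : ∀ p ∈ G, p ∈ L)
    (hG : ∀ p ∈ G, (22 : ℝ) ≤ ‖p‖ ^ 2) (i : ℕ) :
    (#{p ∈ G | ⌊‖p‖ ^ 2 - 22⌋₊ ≤ i} : ℝ) ≤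
      0.6944 * 26.314 ^ 3 * 1.1263 ^ (i + 1) - 0.6944 * 4.39 ^ 6 := by
  have hcount := card_le_of_forall_norm_sq_lt hE hmin (G := {p ∈ G | ⌊‖p‖ ^ 2 - 22⌋₊ ≤ i})
    (fun p hp => hGL p (mem_filter.mp hp).1) (fun p hp => hG p (mem_filter.mp hp).1)
    (T := i + 23) (by linarith [(Nat.cast_nonneg i : (0 : ℝ) ≤ i)]) (fun p hp => by
      obtain ⟨hpG, hpi⟩ := mem_filter.mp hp
      have := (Nat.floor_lt (by linarith [hG p hpG])).mp (Nat.lt_succ_of_le hpi)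
      push_cast at this
      linarith)
  -- Bernoulli: the linear radius bound `26.314 + 1.064 (i + 1)` grows at most geometrically.
  have hlin : 1.064 * ((i : ℝ) + 23) + 2.906 ≤ 26.314 * (1 + 1.064 / 26.314) ^ (i + 1) :=
    calc 1.064 * ((i : ℝ) + 23) + 2.906
        = 26.314 * (1 + ((i + 1 : ℕ) : ℝ) * (1.064 / 26.314)) := by push_cast; ring
      _ ≤ 26.314 * (1 + 1.064 / 26.314) ^ (i + 1) := by
          gcongr; exact one_add_mul_le_pow (by norm_num) _
  have hcube : (1.064 * ((i : ℝ) + 23) + 2.906) ^ 3 ≤ 26.314 ^ 3 * 1.1263 ^ (i + 1) :=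
    calc (1.064 * ((i : ℝ) + 23) + 2.906) ^ 3
        ≤ (26.314 * (1 + 1.064 / 26.314) ^ (i + 1)) ^ 3 := pow_le_pow_left₀ (by positivity) hlin 3
      _ = 26.314 ^ 3 * ((1 + 1.064 / 26.314) ^ 3) ^ (i + 1) := by rw [mul_pow, pow_right_comm]
      _ ≤ 26.314 ^ 3 * 1.1263 ^ (i + 1) := by gcongr; norm_num
  linarith

theorem sum_exp_neg_norm_sq_le (hE : finrank ℝ E = 6)
    (hmin : ∀ x ∈ L, x ≠ 0 → (6 : ℝ) ≤ ‖x‖ ^ 2) (hGL : ∀ p ∈ G, p ∈ L)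
    (hG : ∀ p ∈ G, (22 : ℝ) ≤ ‖p‖ ^ 2) :
    ∑ p ∈ G, exp (-(4 / 3) * ‖p‖ ^ 2) ≤ 1.9e-9 := by
  set z := exp (-(4 / 3))
  have hz0 : 0 ≤ z := (Real.exp_pos _).le
  have hz : z ≤ 0.264 := exp_neg_four_thirds_le
  have hterm : ∀ p ∈ G, exp (-(4 / 3) * ‖p‖ ^ 2) ≤ z ^ 22 * z ^ ⌊‖p‖ ^ 2 - 22⌋₊ := fun p hp =>
    calc exp (-(4 / 3) * ‖p‖ ^ 2) = z ^ 22 * exp (-(4 / 3) * (‖p‖ ^ 2 - 22)) := by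
          rw [← Real.exp_nat_mul, ← Real.exp_add]; ring_nf
      _ ≤ z ^ 22 * z ^ ⌊‖p‖ ^ 2 - 22⌋₊ := by
          gcongr; exact exp_neg_mul_le_exp_neg_pow_floor (by norm_num) (by linarith [hG p hp])
  have hsum := sum_pow_le_of_card_filter_le G (fun p => ⌊‖p‖ ^ 2 - 22⌋₊) hz0 (by linarith)
    (by norm_num) (by nlinarith) (card_filter_floor_le hE hmin hGL hG)
  set C : ℝ := 0.6944 * 26.314 ^ 3
  set D : ℝ := 0.6944 * 4.39 ^ 6
  have hmono : (1 - z) * (C * 1.1263 / (1 - z * 1.1263)) - D ≤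
      C * 1.1263 * ((1 - 0.264) / (1 - 0.264 * 1.1263)) - D := by
    rw [mul_div_left_comm]
    refine sub_le_sub_right (mul_le_mul_of_nonneg_left ?_ (by positivity)) D
    rw [div_le_div_iff₀ (by nlinarith) (by norm_num)]
    nlinarith
  calc ∑ p ∈ G, exp (-(4 / 3) * ‖p‖ ^ 2) ≤ ∑ p ∈ G, z ^ 22 * z ^ ⌊‖p‖ ^ 2 - 22⌋₊ :=
        sum_le_sum hterm
    _ = z ^ 22 * ∑ p ∈ G, z ^ ⌊‖p‖ ^ 2 - 22⌋₊ := (mul_sum ..).symm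
    _ ≤ z ^ 22 * ((1 - z) * (C * 1.1263 / (1 - z * 1.1263)) - D) := by gcongr
    _ ≤ 0.264 ^ 22 * (C * 1.1263 * ((1 - 0.264) / (1 - 0.264 * 1.1263)) - D) :=
        mul_le_mul (pow_le_pow_left₀ hz0 hz 22) hmono
          ((sum_nonneg fun p _ => pow_nonneg hz0 _).trans hsum) (by norm_num)
    _ ≤ 1.9e-9 := by norm_num [C, D]

end Lattice

theorem stmt_18_general (L : Submodule ℤ (EuclideanSpace ℝ (Fin 6)))
    (hmin : ∀ x ∈ L, x ≠ 0 → (6 : ℝ) ≤ ‖x‖ ^ 2)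
    (w : ℝ) (hw : w < 0.24163) :
    ∑' x : {x : EuclideanSpace ℝ (Fin 6) // x ∈ L ∧ (22 : ℝ) ≤ ‖x‖ ^ 2},
        Real.exp (-(Real.pi - 2 * Real.pi * w - 2 / 7) * ‖(x : EuclideanSpace ℝ (Fin 6))‖ ^ 2)
      < 2.19277e-9 := by
  have hξ : 4 / 3 ≤ π - 2 * π * w - 2 / 7 := by
    nlinarith [mul_pos (sub_pos.mpr Real.pi_gt_d2) (sub_pos.mpr hw)]
  refine (tsum_le_of_sum_le' (by norm_num) fun F => ?_).trans_lt (by norm_num : (1.9e-9 : ℝ) < _)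
  calc ∑ x ∈ F, exp (-(π - 2 * π * w - 2 / 7) * ‖(x : EuclideanSpace ℝ (Fin 6))‖ ^ 2)
      ≤ ∑ x ∈ F, exp (-(4 / 3) * ‖(x : EuclideanSpace ℝ (Fin 6))‖ ^ 2) :=
        sum_le_sum fun x _ => Real.exp_le_exp.mpr (by nlinarith [x.2.2])
    _ = ∑ p ∈ F.map (Function.Embedding.subtype _), exp (-(4 / 3) * ‖p‖ ^ 2) :=
        (sum_map F (Function.Embedding.subtype _) fun p => exp (-(4 / 3) * ‖p‖ ^ 2)).symm
    _ ≤ 1.9e-9 := sum_exp_neg_norm_sq_le finrank_euclideanSpace_fin hmin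
        (by simp +contextual) (by simp +contextual)

theorem stmt_18 (L : Submodule ℤ (EuclideanSpace ℝ (Fin 6)))
    (hmin : ∀ x ∈ L, x ≠ 0 → (6 : ℝ) ≤ ‖x‖ ^ 2)
    (w : ℝ) (hw0 : 0 < w) (hw : w < 0.24163) :
    ∑' x : {x : EuclideanSpace ℝ (Fin 6) // x ∈ L ∧ (22 : ℝ) ≤ ‖x‖ ^ 2},
        Real.exp (-(Real.pi - 2 * Real.pi * w - 2 / 7) * ‖(x : EuclideanSpace ℝ (Fin 6))‖ ^ 2)
      < 2.19277e-9 :=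
  stmt_18_general L hmin w hw
end
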